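/- arXiv:1711.03578 — 8 statements merged into one kernel-verified Lean document; each statement's English description precedes it below -/
import Mathlib

section
/- For every g: ℕ → [0,∞) with lim g(n) = ∞ and n/g(n) not converging to 0, there exists a nondecreasing function f: ℕ → ℕ with lim f(n) = ∞ and n/f(n) not converging to 0 such that Z_f = Z_g. -/
open Filter Finset Topology

/-- `cnt A n = |A ∩ [0,n)|`. -/
noncomputable def cnt (A : Set ℕ) (n : ℕ) : ℕ := (A ∩ Set.Iio n).ncard

/-- The simple density ideal associated to a weight `g`. -/
def Zg (g : ℕ → ℝ) : Set (Set ℕ) :=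
  {A | Tendsto (fun n => (cnt A n : ℝ) / g n) atTop (𝓝 0)}

/-- The ideal of asymptotic density zero sets. -/
def Zid : Set (Set ℕ) :=
  {A | Tendsto (fun n => (cnt A n : ℝ) / n) atTop (𝓝 0)}

/-- An ideal is increasing-invariant. -/
def IncInv (I : Set (Set ℕ)) : Prop :=
  ∀ B ∈ I, ∀ C : Set ℕ, (∀ n, cnt C n ≤ cnt B n) → C ∈ I

/-- Tallness. -/
def Tall (I : Set (Set ℕ)) : Prop :=
  ∀ A : Set ℕ, A.Infinite → ∃ B ⊆ A, B.Infinite ∧ B ∈ I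

/-- The conditions on `f` for the Erdős–Ulam ideal `EU f` to be defined. -/
def EUcond (f : ℕ → ℝ) : Prop :=
  (∀ n, 0 ≤ f n) ∧ Tendsto (fun n => ∑ i ∈ Finset.range n, f i) atTop atTop ∧
    Tendsto (fun n => f n / ∑ i ∈ Finset.range (n + 1), f i) atTop (𝓝 0)

/-- The Erdős–Ulam ideal associated to `f`. -/
def EU (f : ℕ → ℝ) : Set (Set ℕ) :=
  {A | Tendsto
    (fun n => (∑ i ∈ Finset.range n, Set.indicator A f i) / ∑ i ∈ Finset.range n, f i)
    atTop (𝓝 0)}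

/-- Being an Erdős–Ulam ideal. -/
def IsEUIdeal (I : Set (Set ℕ)) : Prop := ∃ f : ℕ → ℝ, EUcond f ∧ I = EU f
/-- `cnt A` is monotone. -/
lemma cnt_mono (A : Set ℕ) : Monotone (cnt A) := fun n m h =>
  Set.ncard_le_ncard (Set.inter_subset_inter_right _ (Set.Iio_subset_Iio h))
    ((Set.finite_Iio m).subset Set.inter_subset_right)

/-- every simple density ideal is generated by a nondecreasing ℕ-valued weight. -/
theorem stmt_2 (g : ℕ → ℝ) (hg0 : ∀ n, 0 ≤ g n)
    (hginf : Tendsto g atTop atTop)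
    (hg : ¬ Tendsto (fun n : ℕ => (n : ℝ) / g n) atTop (𝓝 0)) :
    ∃ f : ℕ → ℕ, Monotone f ∧ Tendsto f atTop atTop ∧
      ¬ Tendsto (fun n : ℕ => (n : ℝ) / (f n : ℝ)) atTop (𝓝 0) ∧
      Zg (fun n => (f n : ℝ)) = Zg g := by
  classical
  set g1 : ℕ → ℝ := fun n => ⨅ m : {m // n ≤ m}, g m with hg1def
  have hbdd : ∀ n : ℕ, BddBelow (Set.range fun m : {m // n ≤ m} => g (m : ℕ)) := by
    intro n; exact ⟨0, by rintro x ⟨m, rfl⟩; exact hg0 m⟩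
  have hne : ∀ n : ℕ, Nonempty {m // n ≤ m} := fun n => ⟨⟨n, le_rfl⟩⟩
  have hg1_le : ∀ n m, n ≤ m → g1 n ≤ g m := fun n m h => ciInf_le (hbdd n) ⟨m, h⟩
  have hg1_ge : ∀ (n : ℕ) (c : ℝ), (∀ m, n ≤ m → c ≤ g m) → c ≤ g1 n := fun n c h =>
    le_ciInf fun m => h m m.2
  have hg1_mono : Monotone g1 := fun n n' h =>
    hg1_ge n' (g1 n) fun m hm => hg1_le n m (h.trans hm)
  have hg1_tendsto : Tendsto g1 atTop atTop := by
    rw [tendsto_atTop]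
    intro c
    obtain ⟨N, hN⟩ := eventually_atTop.mp (hginf.eventually_ge_atTop c)
    exact eventually_atTop.mpr ⟨N, fun n hn => hg1_ge n c fun m hm => hN m (hn.trans hm)⟩
  set f : ℕ → ℕ := fun n => ⌈g1 n⌉₊ with hfdef
  have hfmono : Monotone f := fun a b h => Nat.ceil_mono (hg1_mono h)
  have hf_ge : ∀ n, g1 n ≤ (f n : ℝ) := fun n => Nat.le_ceil (g1 n)
  have hf_cast : Tendsto (fun n => (f n : ℝ)) atTop atTop :=
    tendsto_atTop_mono hf_ge hg1_tendsto
  have hf_tendsto : Tendsto f atTop atTop := by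
    exact_mod_cast tendsto_natCast_atTop_iff.mp hf_cast
  -- eventual positivity
  have hE : ∀ᶠ n in atTop, 1 ≤ g1 n := hg1_tendsto.eventually_ge_atTop 1
  -- key bound: on E, a / g n ≤ 2 * (a / f n) for a ≥ 0
  have key : ∀ n : ℕ, 1 ≤ g1 n → ∀ a : ℝ, 0 ≤ a → a / g n ≤ 2 * (a / (f n : ℝ)) := by
    intro n hn a ha
    have hg1pos : (0:ℝ) < g1 n := lt_of_lt_of_le one_pos hn
    have hgn : g1 n ≤ g n := hg1_le n n le_rfl
    have hgpos : (0:ℝ) < g n := lt_of_lt_of_le hg1pos hgn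
    have hfle : (f n : ℝ) ≤ 2 * g n := by
      have h1 : (f n : ℝ) ≤ g1 n + 1 := le_of_lt (Nat.ceil_lt_add_one (le_of_lt hg1pos))
      nlinarith
    have hfpos : (0:ℝ) < (f n : ℝ) := lt_of_lt_of_le hg1pos (hf_ge n)
    have h2 : (2:ℝ) * (a / (f n : ℝ)) = a / ((f n : ℝ) / 2) := by ring
    rw [h2]
    apply div_le_div_of_nonneg_left ha (by linarith) (by linarith)
  refine ⟨f, hfmono, hf_tendsto, ?_, ?_⟩
  · -- n / f n does not tend to 0
    intro hf
    apply hg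
    have h2 : Tendsto (fun n : ℕ => 2 * ((n : ℝ) / (f n : ℝ))) atTop (𝓝 0) := by
      simpa using hf.const_mul 2
    apply squeeze_zero' ?_ ?_ h2
    · exact Eventually.of_forall fun n => div_nonneg (Nat.cast_nonneg n) (hg0 n)
    · filter_upwards [hE] with n hn
      exact key n hn n (Nat.cast_nonneg n)
  · -- Zg f = Zg g
    ext A
    simp only [Zg, Set.mem_setOf_eq]
    constructor
    · intro hA
      have h2 : Tendsto (fun n : ℕ => 2 * ((cnt A n : ℝ) / (f n : ℝ))) atTop (𝓝 0) := by
        simpa using hA.const_mul 2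
      apply squeeze_zero' ?_ ?_ h2
      · exact Eventually.of_forall fun n => div_nonneg (Nat.cast_nonneg _) (hg0 n)
      · filter_upwards [hE] with n hn
        exact key n hn _ (Nat.cast_nonneg _)
    · intro hA
      rw [Metric.tendsto_atTop]
      intro ε hε
      have hε2 : (0:ℝ) < ε / 2 := by linarith
      obtain ⟨N₁, hN₁⟩ := Metric.tendsto_atTop.mp hA (ε / 2) hε2
      obtain ⟨N₂, hN₂⟩ := eventually_atTop.mp hE
      refine ⟨max N₁ N₂, fun n hn => ?_⟩
      have hn1 : N₁ ≤ n := le_trans (le_max_left _ _) hn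
      have hn2 : N₂ ≤ n := le_trans (le_max_right _ _) hn
      have hg1n : 1 ≤ g1 n := hN₂ n hn2
      have hfpos : (0:ℝ) < (f n : ℝ) := lt_of_lt_of_le one_pos (le_trans hg1n (hf_ge n))
      -- cnt A n ≤ (ε/2) * g1 n
      have hcnt : (cnt A n : ℝ) ≤ (ε / 2) * g1 n := by
        rw [← div_le_iff₀' hε2]
        apply hg1_ge
        intro m hm
        have hm1 : N₁ ≤ m := le_trans hn1 hm
        have hm2 : N₂ ≤ m := le_trans hn2 hm
        have hgm : (0:ℝ) < g m := lt_of_lt_of_le one_pos (le_trans (hN₂ m hm2) (hg1_le m m le_rfl))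
        have hd := hN₁ m hm1
        rw [Real.dist_eq, sub_zero, abs_of_nonneg (div_nonneg (Nat.cast_nonneg _) (hg0 m))] at hd
        have hcm : (cnt A m : ℝ) < (ε / 2) * g m := by
          rwa [div_lt_iff₀ hgm] at hd
        have hmono : (cnt A n : ℝ) ≤ (cnt A m : ℝ) := by
          exact_mod_cast cnt_mono A hm
        rw [div_le_iff₀' hε2]
        linarith
      have hbound : (cnt A n : ℝ) / (f n : ℝ) ≤ ε / 2 := by
        rw [div_le_iff₀ hfpos]
        calc (cnt A n : ℝ) ≤ (ε / 2) * g1 n := hcnt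
          _ ≤ ε / 2 * (f n : ℝ) := by
              exact mul_le_mul_of_nonneg_left (hf_ge n) (le_of_lt hε2)
      rw [Real.dist_eq, sub_zero, abs_of_nonneg (div_nonneg (Nat.cast_nonneg _) (le_of_lt hfpos))]
      linarith
end

section
/- An ideal I on ℕ is increasing-invariant if and only if for every B ∈ I, every C ⊆ ℕ, and every δ > 0 such that |C ∩ [0,n)| ≤ δ·|B ∩ [0,n)| for all n, we have C ∈ I. -/
open Filter Finset Topology

/-!
Increasing-invariance already allows a constant factor `k ∈ ℕ`. If `cnt C n ≤ k * cnt B n`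
for all `n`, split `C` into `k` pieces according to the rank of each element in `C` modulo
`k`. Among the elements of `C` below `n`, the ranks in one piece are distinct and their
quotients by `k` are distinct numbers below `cnt B n`, so each piece is dominated by `B`
and lies in `I`; `C` lies in their finite union.
-/

lemma cnt_lt_cnt_of_mem {C : Set ℕ} {x y : ℕ} (hx : x ∈ C) (hxy : x < y) :
    cnt C x < cnt C y :=
  Set.ncard_lt_ncard ⟨Set.inter_subset_inter_right C (Set.Iio_subset_Iio hxy.le),
    fun h => lt_irrefl x (h ⟨hx, hxy⟩).2⟩ ((Set.finite_Iio y).inter_of_right C)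

lemma cnt_injOn (C : Set ℕ) : Set.InjOn (cnt C) C :=
  StrictMonoOn.injOn fun _ hx _ _ hxy => cnt_lt_cnt_of_mem hx hxy

-- For `x ∈ C`, `cnt C x` is the rank of `x` in `C`, counted from `0`.
def rankModPart (C : Set ℕ) (k j : ℕ) : Set ℕ := {x ∈ C | cnt C x % k = j}

lemma subset_sup_rankModPart (C : Set ℕ) {k : ℕ} (hk : 0 < k) :
    C ⊆ (range k).sup (rankModPart C k) := by
  intro x hx
  rw [Finset.sup_set_eq_biUnion, Set.mem_iUnion₂]
  exact ⟨cnt C x % k, mem_range.2 (Nat.mod_lt _ hk), hx, rfl⟩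

lemma cnt_rankModPart_le {C : Set ℕ} {k n m : ℕ} (hk : 0 < k) (hCn : cnt C n ≤ k * m)
    (j : ℕ) : cnt (rankModPart C k j) n ≤ m := by
  calc cnt (rankModPart C k j) n ≤ (Set.Iio m).ncard := by
        refine Set.ncard_le_ncard_of_injOn (fun x => cnt C x / k) ?_ ?_
        · rintro x ⟨⟨hxC, -⟩, hxn⟩
          exact (Nat.div_lt_iff_lt_mul hk).2 <|
            (cnt_lt_cnt_of_mem hxC hxn).trans_le (hCn.trans_eq (Nat.mul_comm k m))
        · rintro x ⟨⟨hxC, hxj⟩, -⟩ y ⟨⟨hyC, hyj⟩, -⟩ hdiv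
          refine cnt_injOn C hxC hyC ?_
          rw [← Nat.div_add_mod (cnt C x) k, ← Nat.div_add_mod (cnt C y) k,
            show cnt C x / k = cnt C y / k from hdiv, hxj, hyj]
    _ = m := by rw [← Finset.coe_Iio, Set.ncard_coe_finset, Nat.card_Iio]

lemma exists_nat_cnt_le_mul {B C : Set ℕ} {δ : ℝ}
    (hCB : ∀ n, (cnt C n : ℝ) ≤ δ * (cnt B n : ℝ)) :
    ∃ k : ℕ, 0 < k ∧ ∀ n, cnt C n ≤ k * cnt B n := by
  refine ⟨⌈δ⌉₊ + 1, Nat.succ_pos _, fun n => ?_⟩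
  have hδ : δ ≤ (⌈δ⌉₊ + 1 : ℕ) := by push_cast; linarith [Nat.le_ceil δ]
  exact_mod_cast (hCB n).trans (mul_le_mul_of_nonneg_right hδ (Nat.cast_nonneg _))

theorem stmt_6_general (I : Set (Set ℕ))
    (hsub : ∀ A ∈ I, ∀ B ⊆ A, B ∈ I)
    (hun : ∀ A ∈ I, ∀ B ∈ I, A ∪ B ∈ I) :
    IncInv I ↔ ∀ B ∈ I, ∀ C : Set ℕ, ∀ δ : ℝ, 0 < δ →
      (∀ n, (cnt C n : ℝ) ≤ δ * (cnt B n : ℝ)) → C ∈ I := by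
  constructor
  · intro hinc B hB C δ _ hCB
    obtain ⟨k, hk, hCk⟩ := exists_nat_cnt_le_mul hCB
    have hparts : ∀ j ∈ range k, rankModPart C k j ∈ I := fun j _ =>
      hinc B hB _ fun n => cnt_rankModPart_le hk (hCk n) j
    have hunion : (range k).sup (rankModPart C k) ∈ I :=
      Finset.sup_induction (hsub B hB ∅ (Set.empty_subset B)) hun hparts
    exact hsub _ hunion C (subset_sup_rankModPart C hk)
  · intro h B hB C hCB
    exact h B hB C 1 one_pos fun n => by simpa using (Nat.cast_le (α := ℝ)).2 (hCB n)

/-- increasing-invariance is equivalent to its version with a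
multiplicative constant `δ`. -/
theorem stmt_6 (I : Set (Set ℕ))
    (hsub : ∀ A ∈ I, ∀ B ⊆ A, B ∈ I)
    (hun : ∀ A ∈ I, ∀ B ∈ I, A ∪ B ∈ I)
    (hfin : ∀ A : Set ℕ, A.Finite → A ∈ I)
    (hproper : Set.univ ∉ I) :
    IncInv I ↔ ∀ B ∈ I, ∀ C : Set ℕ, ∀ δ : ℝ, 0 < δ →
      (∀ n, (cnt C n : ℝ) ≤ δ * (cnt B n : ℝ)) → C ∈ I :=
  stmt_6_general I hsub hun
end

section
/- The ideal Fin of finite subsets of ℕ is increasing-invariant, and it is the only increasing-invariant ideal among all non-tall ideals on ℕ: if I ≠ Fin is an ideal on ℕ that is increasing-invariant, then I is tall. -/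
open Filter Finset Topology

/- If `I` contains an infinite set `B` and `A` is infinite, let `C ⊆ A` consist of the elements of
`A` whose index in the increasing enumeration of `A` lies in `B`. The `k`-th element of `C` is
`a_{b_k} ≥ b_k`, so `C` is counted more slowly than `B` and lies in `I` by increasing-invariance.
An infinite set, having unbounded counting function, is never dominated by a finite one. -/

lemma cnt_le_ncard {B : Set ℕ} (hB : B.Finite) (n : ℕ) : cnt B n ≤ B.ncard :=
  Set.ncard_le_ncard Set.inter_subset_left hB

lemma Set.Infinite.exists_le_cnt {C : Set ℕ} (hC : C.Infinite) (m : ℕ) : ∃ n, m ≤ cnt C n := by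
  obtain ⟨s, hsC, rfl⟩ := hC.exists_subset_card_eq m
  refine ⟨s.sup id + 1, ?_⟩
  have hsub : (s : Set ℕ) ⊆ C ∩ Set.Iio (s.sup id + 1) := fun x hx =>
    ⟨hsC hx, Nat.lt_succ_of_le (Finset.le_sup (f := id) hx)⟩
  rw [← Set.ncard_coe_finset]
  exact Set.ncard_le_ncard hsub ((Set.finite_Iio _).inter_of_right C)

theorem incInv_finite : IncInv {A : Set ℕ | A.Finite} := by
  intro B hB C hCB
  by_contra hC
  obtain ⟨n, hn⟩ := Set.Infinite.exists_le_cnt hC (B.ncard + 1)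
  have := (hCB n).trans (cnt_le_ncard hB n)
  omega

lemma cnt_range_le_of_nth_le {B : Set ℕ} (hB : B.Infinite) {f : ℕ → ℕ}
    (hf : Function.Injective f) (hfB : ∀ k, Nat.nth (· ∈ B) k ≤ f k) (n : ℕ) :
    cnt (Set.range f) n ≤ cnt B n := by
  apply Set.ncard_le_ncard_of_injOn (fun c => Nat.nth (· ∈ B) (Function.invFun f c))
  · rintro _ ⟨⟨k, rfl⟩, hlt⟩
    simp only [Function.leftInverse_invFun hf k]
    exact ⟨Nat.nth_mem_of_infinite hB k, (hfB k).trans_lt hlt⟩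
  · rintro _ ⟨⟨k, rfl⟩, _⟩ _ ⟨⟨k', rfl⟩, _⟩ h
    simp only [Function.leftInverse_invFun hf k, Function.leftInverse_invFun hf k'] at h
    rw [Nat.nth_injective hB h]

theorem IncInv.tall_of_infinite_mem {I : Set (Set ℕ)} (hI : IncInv I) {B : Set ℕ} (hBI : B ∈ I)
    (hB : B.Infinite) : Tall I := by
  intro A hA
  have hmono : StrictMono fun k => Nat.nth (· ∈ A) (Nat.nth (· ∈ B) k) :=
    (Nat.nth_strictMono hA).comp (Nat.nth_strictMono hB)
  refine ⟨_, ?_, Set.infinite_range_of_injective hmono.injective,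
    hI B hBI _ (cnt_range_le_of_nth_le hB hmono.injective fun k => ?_)⟩
  · rintro _ ⟨k, rfl⟩
    exact Nat.nth_mem_of_infinite hA _
  · exact (Nat.nth_strictMono hA).le_apply

/-- `Fin` is increasing-invariant, and it is the only
increasing-invariant ideal among non-tall ideals. -/
theorem stmt_8 :
    IncInv {A : Set ℕ | A.Finite} ∧
    ∀ I : Set (Set ℕ),
      (∀ A ∈ I, ∀ B ⊆ A, B ∈ I) → (∀ A ∈ I, ∀ B ∈ I, A ∪ B ∈ I) →
      (∀ A : Set ℕ, A.Finite → A ∈ I) → Set.univ ∉ I →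
      I ≠ {A : Set ℕ | A.Finite} → IncInv I → Tall I := by
  refine ⟨incInv_finite, fun I _ _ hfin _ hne hinc => ?_⟩
  obtain ⟨B, hBI, hB⟩ : ∃ B ∈ I, B.Infinite := by
    by_contra! h
    exact hne (Set.ext fun X => ⟨h X, hfin X⟩)
  exact hinc.tall_of_infinite_mem hBI hB
end

section
/- If a density ideal Exh(sup_n μ_n), generated by a sequence (μ_n) of measures on ℕ with pairwise disjoint finite supports, satisfies sup over n, i of |supp(μ_n)|·μ_n({i}) < ∞, then the ideal is almost uniformly distributed. -/
open Filter Finset Topology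

/-- a density ideal with `sup_{n,i} |supp μ_n| · μ_n({i}) < ∞` is
almost uniformly distributed. -/
theorem stmt_10 (μ : ℕ → ℕ → ℝ) (D : ℕ → Finset ℕ)
    (hnn : ∀ n i, 0 ≤ μ n i)
    (hsupp : ∀ n i, μ n i ≠ 0 ↔ i ∈ D n)
    (hdisj : ∀ m n, m ≠ n → Disjoint (D m) (D n))
    (hbd : ∃ M : ℝ, ∀ n i, ((D n).card : ℝ) * μ n i ≤ M) :
    ∀ B : Set ℕ,
      -- condition (⋆): no point of `B` has measure below `1/d_n` ...
      (∀ n, ∀ i ∈ B, i ∈ D n → (1 : ℝ) / (D n).card ≤ μ n i) →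
      -- ... and the level sets of the measures on `B` are uniformly small
      (∀ m : ℕ, 0 < m → ∃ nm : ℕ, ∀ n > nm, ∀ k : ℕ, 0 < k →
        ((Set.ncard {i : ℕ | i ∈ B ∧ (k : ℝ) / (D n).card ≤ μ n i ∧
            μ n i < ((k : ℝ) + 1) / (D n).card} : ℝ)
          ≤ ((D n).card : ℝ) / ((m : ℝ) * k * (k + 1)))) →
      B ∈ {A : Set ℕ | Tendsto (fun n => ∑ i ∈ D n, Set.indicator A (μ n) i) atTop (𝓝 0)} := by
  intro B hB1 hB2
  classical
  simp only [Set.mem_setOf_eq]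
  rw [Metric.tendsto_atTop]
  intro eps heps
  obtain ⟨M, hM⟩ := hbd
  set K : ℕ := ⌈max M 1⌉₊ with hKdef
  have hMK : M ≤ (K : ℝ) := le_trans (le_max_left M 1) (Nat.le_ceil _)
  have hK1 : 1 ≤ K := by
    have : (1 : ℝ) ≤ (K : ℝ) := le_trans (le_max_right M 1) (Nat.le_ceil _)
    exact_mod_cast this
  obtain ⟨m, hm⟩ := exists_nat_gt ((K : ℝ) / eps)
  have hm0 : 0 < m := by
    have h1 : (0 : ℝ) < (K : ℝ) / eps := by positivity
    have : (0 : ℝ) < m := lt_trans h1 hm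
    exact_mod_cast this
  have hm0' : (0 : ℝ) < m := by exact_mod_cast hm0
  have hKm : (K : ℝ) / m < eps := by
    rw [div_lt_iff₀ hm0']
    have := (div_lt_iff₀ heps).mp hm
    linarith
  obtain ⟨nm, hnm⟩ := hB2 m hm0
  refine ⟨nm + 1, fun n hn => ?_⟩
  have hn' : n > nm := hn
  have hSnn : (0 : ℝ) ≤ ∑ i ∈ D n, Set.indicator B (μ n) i :=
    Finset.sum_nonneg fun i _ => Set.indicator_nonneg (fun j _ => hnn n j) i
  rw [Real.dist_eq, sub_zero, abs_of_nonneg hSnn]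
  have key : (∑ i ∈ D n, Set.indicator B (μ n) i) ≤ (K : ℝ) / m := by
    rcases eq_or_ne (D n).card 0 with hd | hd
    · rw [Finset.card_eq_zero] at hd
      rw [hd]
      simp only [Finset.sum_empty]
      positivity
    · have hd0 : (0 : ℝ) < ((D n).card : ℝ) := by
        exact_mod_cast Nat.pos_of_ne_zero hd
      have hsum : (∑ i ∈ D n, Set.indicator B (μ n) i)
          = ∑ i ∈ (D n).filter (· ∈ B), μ n i := by
        rw [Finset.sum_filter]
        refine Finset.sum_congr rfl fun i _ => ?_
        simp [Set.indicator_apply]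
      rw [hsum]
      have hmaps : ∀ i ∈ (D n).filter (· ∈ B),
          ⌊((D n).card : ℝ) * μ n i⌋₊ ∈ Finset.Icc 1 K := by
        intro i hi
        rw [Finset.mem_filter] at hi
        obtain ⟨hiD, hiB⟩ := hi
        have h1 : (1 : ℝ) ≤ ((D n).card : ℝ) * μ n i := by
          have := hB1 n i hiB hiD
          rw [div_le_iff₀ hd0] at this
          linarith [this]
        refine Finset.mem_Icc.mpr ⟨Nat.le_floor (by exact_mod_cast h1), ?_⟩
        calc ⌊((D n).card : ℝ) * μ n i⌋₊ ≤ ⌊(K : ℝ)⌋₊ :=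
              Nat.floor_le_floor (le_trans (hM n i) hMK)
          _ = K := Nat.floor_natCast K
      rw [← Finset.sum_fiberwise_of_maps_to hmaps (fun i => μ n i)]
      have fiber_bd : ∀ k ∈ Finset.Icc 1 K,
          (∑ i ∈ ((D n).filter (· ∈ B)).filter
              (fun i => ⌊((D n).card : ℝ) * μ n i⌋₊ = k), μ n i) ≤ 1 / m := by
        intro k hk
        have hk1 : 1 ≤ k := (Finset.mem_Icc.mp hk).1
        have hk0' : (0 : ℝ) < k := by exact_mod_cast hk1
        set Fk := ((D n).filter (· ∈ B)).filter
            (fun i => ⌊((D n).card : ℝ) * μ n i⌋₊ = k) with hFk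
        set L := {i : ℕ | i ∈ B ∧ (k : ℝ) / ((D n).card : ℝ) ≤ μ n i ∧
            μ n i < ((k : ℝ) + 1) / ((D n).card : ℝ)} with hL
        have hmem : ∀ i ∈ Fk, i ∈ L ∧ μ n i < ((k : ℝ) + 1) / ((D n).card : ℝ) := by
          intro i hi
          rw [hFk, Finset.mem_filter, Finset.mem_filter] at hi
          obtain ⟨⟨hiD, hiB⟩, hfl⟩ := hi
          have hnn' : (0 : ℝ) ≤ ((D n).card : ℝ) * μ n i := mul_nonneg (le_of_lt hd0) (hnn n i)
          have hlow : (k : ℝ) ≤ ((D n).card : ℝ) * μ n i := by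
            rw [← hfl]; exact Nat.floor_le hnn'
          have hhigh : ((D n).card : ℝ) * μ n i < (k : ℝ) + 1 := by
            have h := Nat.lt_floor_add_one (((D n).card : ℝ) * μ n i)
            rw [hfl] at h
            exact_mod_cast h
          constructor
          · exact ⟨hiB, (div_le_iff₀ hd0).mpr (by linarith),
              (lt_div_iff₀ hd0).mpr (by linarith)⟩
          · exact (lt_div_iff₀ hd0).mpr (by linarith)
        have hLsub : L ⊆ ↑(D n) := by
          intro i hi
          rw [hL, Set.mem_setOf_eq] at hi
          have hpos : (0 : ℝ) < μ n i := lt_of_lt_of_le (by positivity) hi.2.1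
          exact Finset.mem_coe.mpr ((hsupp n i).mp (ne_of_gt hpos))
        have hLfin : L.Finite := Set.Finite.subset (D n).finite_toSet hLsub
        have hcard : (Fk.card : ℝ) ≤ L.ncard := by
          have hsub : ↑Fk ⊆ L := fun i hi => (hmem i hi).1
          have := Set.ncard_le_ncard hsub hLfin
          rw [Set.ncard_coe_finset] at this
          exact_mod_cast this
        have hLbd := hnm n hn' k hk1
        calc (∑ i ∈ Fk, μ n i)
            ≤ ∑ i ∈ Fk, ((k : ℝ) + 1) / ((D n).card : ℝ) :=
              Finset.sum_le_sum fun i hi => le_of_lt (hmem i hi).2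
          _ = (Fk.card : ℝ) * (((k : ℝ) + 1) / ((D n).card : ℝ)) := by
              rw [Finset.sum_const, nsmul_eq_mul]
          _ ≤ (((D n).card : ℝ) / ((m : ℝ) * k * (k + 1))) *
                (((k : ℝ) + 1) / ((D n).card : ℝ)) := by
              refine mul_le_mul_of_nonneg_right (le_trans hcard hLbd) (by positivity)
          _ = 1 / ((m : ℝ) * k) := by
              field_simp
          _ ≤ 1 / m := by
              apply one_div_le_one_div_of_le hm0'
              have hk1' : (1 : ℝ) ≤ (k : ℝ) := by exact_mod_cast hk1
              nlinarith
      calc (∑ k ∈ Finset.Icc 1 K, ∑ i ∈ ((D n).filter (· ∈ B)).filter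
              (fun i => ⌊((D n).card : ℝ) * μ n i⌋₊ = k), μ n i)
          ≤ ∑ _k ∈ Finset.Icc 1 K, (1 : ℝ) / m := Finset.sum_le_sum fiber_bd
        _ = (K : ℝ) / m := by
            rw [Finset.sum_const, Nat.card_Icc, nsmul_eq_mul]
            simp
            ring
  linarith
end

section
/- Let (D_n) be consecutive intervals partitioning ℕ with |D_n| = 2^{n+1}, and define measures μ_n({i}) = 1/2^n for the last 2^n elements of D_n (i.e. max D_n − 2^n < i ≤ max D_n) and 0 otherwise. Then the density ideal Exh(sup_n μ_n) is not increasing-invariant. -/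
open Filter Finset Topology

/-- The `n`-th measure from STATEMENT 11 applied to a set `A`:
`D_n = [2^{n+1}-2, 2^{n+2}-2)` are consecutive intervals of length `2^{n+1}`
partitioning ℕ, and the measure is `1/2^n` on the last `2^n` points of `D_n`. -/
noncomputable def mu11 (n : ℕ) (A : Set ℕ) : ℝ :=
  ∑ i ∈ Finset.Ico (2 ^ (n + 2) - 2 - 2 ^ n) (2 ^ (n + 2) - 2),
    Set.indicator A (fun _ => (1 : ℝ) / 2 ^ n) i

def Bset : Set ℕ := {k | ∃ n, 2 ^ (n + 1) ≤ k + 2 ∧ k + 2 < 3 * 2 ^ n}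

def Cset : Set ℕ := {k | ∃ n, 3 * 2 ^ n ≤ k + 2 ∧ k + 2 < 2 ^ (n + 2)}

lemma uniq11 {k m n : ℕ} (h1 : 2 ^ (m + 1) ≤ k) (h2 : k < 2 ^ (m + 2))
    (h3 : 2 ^ (n + 1) ≤ k) (h4 : k < 2 ^ (n + 2)) : m = n := by
  have e1 : Nat.log 2 k = m + 1 := Nat.log_eq_of_pow_le_of_lt_pow h1 h2
  have e2 : Nat.log 2 k = n + 1 := Nat.log_eq_of_pow_le_of_lt_pow h3 h4
  omega

lemma muB (n : ℕ) : mu11 n Bset = 0 := by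
  unfold mu11
  apply Finset.sum_eq_zero
  intro i hi
  simp only [Finset.mem_Ico] at hi
  apply Set.indicator_of_notMem
  rintro ⟨m, hm1, hm2⟩
  have hp : (1:ℕ) ≤ 2 ^ n := Nat.one_le_two_pow
  have hpm : (1:ℕ) ≤ 2 ^ m := Nat.one_le_two_pow
  have en1 : 2 ^ (n + 1) = 2 * 2 ^ n := by ring
  have en2 : 2 ^ (n + 2) = 4 * 2 ^ n := by ring
  have em1 : 2 ^ (m + 1) = 2 * 2 ^ m := by ring
  have em2 : 2 ^ (m + 2) = 4 * 2 ^ m := by ring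
  have hmn : m = n := uniq11 hm1 (by omega) (by omega) (by omega)
  subst hmn
  omega

lemma muC (n : ℕ) : mu11 n Cset = 1 := by
  unfold mu11
  have hp : (1:ℕ) ≤ 2 ^ n := Nat.one_le_two_pow
  have en1 : 2 ^ (n + 1) = 2 * 2 ^ n := by ring
  have en2 : 2 ^ (n + 2) = 4 * 2 ^ n := by ring
  have hmem : ∀ i ∈ Finset.Ico (2 ^ (n + 2) - 2 - 2 ^ n) (2 ^ (n + 2) - 2),
      Set.indicator Cset (fun _ => (1 : ℝ) / 2 ^ n) i = 1 / 2 ^ n := by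
    intro i hi
    simp only [Finset.mem_Ico] at hi
    have hiC : i ∈ Cset := by
      show ∃ n', 3 * 2 ^ n' ≤ i + 2 ∧ i + 2 < 2 ^ (n' + 2)
      exact ⟨n, by omega, by omega⟩
    exact Set.indicator_of_mem hiC _
  rw [Finset.sum_congr rfl hmem, Finset.sum_const, Nat.card_Ico, nsmul_eq_mul]
  have hcard : 2 ^ (n + 2) - 2 - (2 ^ (n + 2) - 2 - 2 ^ n) = 2 ^ n := by omega
  rw [hcard]
  push_cast
  field_simp

lemma cnt_le11 (m : ℕ) : cnt Cset m ≤ cnt Bset m := by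
  unfold cnt
  apply Set.ncard_le_ncard_of_injOn (fun c => c - 2 ^ (Nat.log 2 (c + 2) - 1))
  · rintro c ⟨⟨n, h1, h2⟩, hc⟩
    have hp : (1:ℕ) ≤ 2 ^ n := Nat.one_le_two_pow
    have en1 : 2 ^ (n + 1) = 2 * 2 ^ n := by ring
    have en2 : 2 ^ (n + 2) = 4 * 2 ^ n := by ring
    have hlog : Nat.log 2 (c + 2) = n + 1 :=
      Nat.log_eq_of_pow_le_of_lt_pow (by omega) h2
    simp only [hlog, Nat.add_sub_cancel]
    simp only [Set.mem_Iio] at hc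
    refine Set.mem_inter ?_ ?_
    · show ∃ n', 2 ^ (n' + 1) ≤ (c - 2 ^ n) + 2 ∧ (c - 2 ^ n) + 2 < 3 * 2 ^ n'
      exact ⟨n, by omega, by omega⟩
    · simp only [Set.mem_Iio]
      omega
  · rintro c1 ⟨⟨n1, h11, h12⟩, _⟩ c2 ⟨⟨n2, h21, h22⟩, _⟩ heq
    have hp1 : (1:ℕ) ≤ 2 ^ n1 := Nat.one_le_two_pow
    have hp2 : (1:ℕ) ≤ 2 ^ n2 := Nat.one_le_two_pow
    have e11 : 2 ^ (n1 + 1) = 2 * 2 ^ n1 := by ring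
    have e12 : 2 ^ (n1 + 2) = 4 * 2 ^ n1 := by ring
    have e21 : 2 ^ (n2 + 1) = 2 * 2 ^ n2 := by ring
    have e22 : 2 ^ (n2 + 2) = 4 * 2 ^ n2 := by ring
    have hlog1 : Nat.log 2 (c1 + 2) = n1 + 1 :=
      Nat.log_eq_of_pow_le_of_lt_pow (by omega) h12
    have hlog2 : Nat.log 2 (c2 + 2) = n2 + 1 :=
      Nat.log_eq_of_pow_le_of_lt_pow (by omega) h22
    simp only [hlog1, hlog2, Nat.add_sub_cancel] at heq
    have hb11 : 2 ^ (n1 + 1) ≤ c1 - 2 ^ n1 + 2 := by omega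
    have hb12 : c1 - 2 ^ n1 + 2 < 2 ^ (n1 + 2) := by omega
    have hb21 : 2 ^ (n2 + 1) ≤ c1 - 2 ^ n1 + 2 := by rw [heq]; omega
    have hb22 : c1 - 2 ^ n1 + 2 < 2 ^ (n2 + 2) := by rw [heq]; omega
    have hn : n1 = n2 := uniq11 hb11 hb12 hb21 hb22
    have hpe : (2:ℕ) ^ n1 = 2 ^ n2 := by rw [hn]
    omega

/-- the ideal `Exh(sup_n μ_n)` above is not increasing-invariant. -/
theorem stmt_11 :
    ¬ IncInv {A : Set ℕ | Tendsto (fun n => mu11 n A) atTop (𝓝 0)} := by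
  intro h
  have hB : Bset ∈ {A : Set ℕ | Tendsto (fun n => mu11 n A) atTop (𝓝 0)} := by
    simp only [Set.mem_setOf_eq, muB]
    exact tendsto_const_nhds
  have hC := h Bset hB Cset cnt_le11
  simp only [Set.mem_setOf_eq, muC] at hC
  have := tendsto_nhds_unique hC tendsto_const_nhds
  norm_num at this
end

section
/- There is a family of size continuum of Erdős–Ulam ideals, none of which is increasing-invariant, that forms an antichain in the order ⊑ (containment of isomorphic copy): for any two distinct ideals I, J in the family there is no bijection φ: ℕ → ℕ with A ∈ I ⟹ φ^{-1}[A] ∈ J. -/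
open Filter Finset Topology

/-- `I ⊑ J`: `J` contains an isomorphic copy of `I`. -/
def SqLe (I J : Set (Set ℕ)) : Prop :=
  ∃ φ : ℕ → ℕ, Function.Bijective φ ∧ ∀ A ∈ I, φ ⁻¹' A ∈ J

/-!
For `x ⊆ ℕ`, cut `ℕ` into consecutive blocks of lengths `2 ^ blockExp x b` and spread the weight
`2 ^ b` uniformly over block `b`. Since block masses grow geometrically, a set belongs to the
resulting Erdős–Ulam ideal iff its relative density in block `b` tends to `0`.

Blocks `2k - 1` and `2k` form level `k`. The odd block of a level is `2 ^ k` times longer than the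
even one, so the heads of the odd blocks, of the length of the following block, form a null set
that stays ahead in counting of the union of the even blocks, which is not null: the ideal is not
increasing-invariant. The exponents of level `k` are shifted by `spacing k * code x k`, where
`code x k < 2 ^ k` encodes `x ∩ [0, k)`.

If `x ≠ y`, their codes differ from some level on. Then, for a late odd `y`-block of length `2 ^ g`,
every `x`-block `b` has length at most `2 ^ (g - 3)` or at least `2 ^ (g + b)`. Hence the image of
that `y`-block under an injection fills every `x`-block `b` to at most a `1 / (b + 1)` fraction,
except for blocks of length at most `2 ^ (g - 3)`, whose lengths are distinct powers of two and so
total less than `2 ^ g / 4` (the first `N` blocks are negligible as well once `g` is large).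
Collecting these light parts for a sparse sequence of `y`-blocks gives
a set in the `x`-ideal whose preimage has density at least `1 / 2` on infinitely many `y`-blocks.
-/

namespace ErdosUlam

lemma tendsto_sum_two_pow_mul_div_two_pow {d : ℕ → ℝ} (hd : Tendsto d atTop (𝓝 0)) :
    Tendsto (fun m => (∑ j ∈ range m, 2 ^ j * d j) / 2 ^ m) atTop (𝓝 0) := by
  have hgeom (m : ℕ) : ∑ j ∈ range m, (2 : ℝ) ^ j = 2 ^ m - 1 := by
    rw [geom_sum_eq (by norm_num)]; ring
  have hsmall : (fun j => (2 : ℝ) ^ j * d j) =o[atTop] fun j => (2 : ℝ) ^ j := by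
    simpa using (Asymptotics.isBigO_refl (fun j => (2 : ℝ) ^ j) atTop).mul_isLittleO
      ((Asymptotics.isLittleO_one_iff ℝ).2 hd)
  have hsum := hsmall.sum_range (fun j => by positivity) <| by
    simp_rw [hgeom]
    exact tendsto_atTop_add_const_right _ _ (tendsto_pow_atTop_atTop_of_one_lt one_lt_two)
  refine (hsum.trans_isBigO (Asymptotics.IsBigO.of_bound 1 (Eventually.of_forall fun m => ?_)))
    |>.tendsto_div_nhds_zero
  rw [hgeom, one_mul, Real.norm_of_nonneg (by simpa using one_le_pow₀ one_le_two (n := m)),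
    Real.norm_of_nonneg (by positivity)]
  linarith

section Blocks

variable (L : ℕ → ℕ)

def blockStart (b : ℕ) : ℕ := ∑ i ∈ range b, L i

def block (b : ℕ) : Finset ℕ := Ico (blockStart L b) (blockStart L (b + 1))

def blockOf (n : ℕ) : ℕ := Nat.findGreatest (fun b => blockStart L b ≤ n) n

noncomputable def blockWeight (n : ℕ) : ℝ := 2 ^ blockOf L n / L (blockOf L n)

noncomputable def blockCount (A : Set ℕ) (b : ℕ) : ℕ := (A ∩ ↑(block L b)).ncard

noncomputable def blockDensity (A : Set ℕ) (b : ℕ) : ℝ := blockCount L A b / L b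

lemma blockStart_succ (b : ℕ) : blockStart L (b + 1) = blockStart L b + L b :=
  sum_range_succ _ _

lemma blockStart_mono : Monotone (blockStart L) :=
  monotone_nat_of_le_succ fun b => by rw [blockStart_succ]; omega

lemma card_block (b : ℕ) : #(block L b) = L b := by
  rw [block, Nat.card_Ico, blockStart_succ]; omega

lemma blockCount_coe (S : Finset ℕ) (b : ℕ) : blockCount L ↑S b = #(S ∩ block L b) := by
  rw [blockCount, ← coe_inter, Set.ncard_coe_finset]

lemma blockCount_eq_card_filter (A : Set ℕ) [DecidablePred (· ∈ A)] (b : ℕ) :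
    blockCount L A b = #{n ∈ block L b | n ∈ A} := by
  rw [blockCount, ← Set.ncard_coe_finset, coe_filter, Set.inter_comm]
  rfl

lemma blockCount_mono {A B : Set ℕ} (h : A ⊆ B) (b : ℕ) : blockCount L A b ≤ blockCount L B b :=
  Set.ncard_le_ncard (Set.inter_subset_inter_left _ h) ((block L b).finite_toSet.inter_of_right _)

lemma blockStart_blockOf_le (n : ℕ) : blockStart L (blockOf L n) ≤ n :=
  Nat.findGreatest_spec (P := fun b => blockStart L b ≤ n) (Nat.zero_le n) (by simp [blockStart])

lemma blockWeight_nonneg (n : ℕ) : 0 ≤ blockWeight L n := by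
  unfold blockWeight; positivity

lemma sum_range_blockStart (g : ℕ → ℝ) (B : ℕ) :
    ∑ i ∈ range (blockStart L B), g i = ∑ b ∈ range B, ∑ i ∈ block L b, g i := by
  induction B with
  | zero => simp [blockStart]
  | succ B ih =>
    rw [sum_range_succ, ← ih, block, sum_range_add_sum_Ico _ (blockStart_mono L B.le_succ)]

lemma blockDensity_nonneg (A : Set ℕ) (b : ℕ) : 0 ≤ blockDensity L A b := by
  unfold blockDensity; positivity

noncomputable def mass (A : Set ℕ) (n : ℕ) : ℝ := ∑ i ∈ range n, A.indicator (blockWeight L) i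

lemma mass_univ (n : ℕ) : mass L Set.univ n = ∑ i ∈ range n, blockWeight L i := by
  simp [mass]

lemma mem_EU_iff_tendsto_mass {A : Set ℕ} :
    A ∈ EU (blockWeight L) ↔ Tendsto (fun n => mass L A n / mass L Set.univ n) atTop (𝓝 0) := by
  simp [EU, mass]

lemma mass_nonneg (A : Set ℕ) (n : ℕ) : 0 ≤ mass L A n :=
  sum_nonneg fun i _ => Set.indicator_nonneg (fun k _ => blockWeight_nonneg L k) i

lemma mass_mono (A : Set ℕ) : Monotone (mass L A) :=
  fun _ _ h => sum_le_sum_of_subset_of_nonneg (range_subset_range.2 h) fun i _ _ =>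
    Set.indicator_nonneg (fun k _ => blockWeight_nonneg L k) i

variable {L} (hL : ∀ b, 0 < L b)
include hL

lemma le_blockStart (b : ℕ) : b ≤ blockStart L b := by
  induction b with
  | zero => simp [blockStart]
  | succ b ih => rw [blockStart_succ]; have := hL b; omega

lemma lt_blockStart_blockOf_succ (n : ℕ) : n < blockStart L (blockOf L n + 1) := by
  by_contra! h
  exact Nat.findGreatest_is_greatest (lt_add_one (blockOf L n)) ((le_blockStart hL _).trans h) h

lemma blockOf_eq_iff {n b : ℕ} :
    blockOf L n = b ↔ blockStart L b ≤ n ∧ n < blockStart L (b + 1) := by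
  refine ⟨fun h => h ▸ ⟨blockStart_blockOf_le L n, lt_blockStart_blockOf_succ hL n⟩,
    fun ⟨h₁, h₂⟩ => ?_⟩
  have := blockStart_blockOf_le L n
  have := lt_blockStart_blockOf_succ hL n
  rcases lt_trichotomy (blockOf L n) b with h | h | h
  · have := blockStart_mono L (show blockOf L n + 1 ≤ b by omega); omega
  · exact h
  · have := blockStart_mono L (show b + 1 ≤ blockOf L n by omega); omega

lemma mem_block_iff {n b : ℕ} : n ∈ block L b ↔ blockOf L n = b := by
  rw [blockOf_eq_iff hL, block, mem_Ico]

lemma blockOf_lt_iff {n N : ℕ} : blockOf L n < N ↔ n < blockStart L N := by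
  constructor
  · intro h
    exact (lt_blockStart_blockOf_succ hL n).trans_le (blockStart_mono L h)
  · intro h
    by_contra! h'
    exact (blockStart_mono L h').trans (blockStart_blockOf_le L n) |>.not_gt h

lemma tendsto_blockOf : Tendsto (blockOf L) atTop atTop :=
  tendsto_atTop_atTop.2 fun b => ⟨blockStart L b, fun n hn => by
    by_contra! h; exact ((blockOf_lt_iff hL).1 h).not_ge hn⟩

lemma blockWeight_of_mem {n b : ℕ} (h : n ∈ block L b) : blockWeight L n = 2 ^ b / L b := by
  rw [blockWeight, (mem_block_iff hL).1 h]

lemma sum_indicator_block (A : Set ℕ) (b : ℕ) :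
    ∑ i ∈ block L b, A.indicator (blockWeight L) i = 2 ^ b * blockDensity L A b := by
  classical
  rw [sum_indicator_eq_sum_filter, sum_congr rfl fun i hi => blockWeight_of_mem hL (mem_filter.1 hi).1,
    sum_const, nsmul_eq_mul, blockDensity, blockCount_eq_card_filter]
  ring

lemma mass_blockStart (A : Set ℕ) (B : ℕ) :
    mass L A (blockStart L B) = ∑ b ∈ range B, 2 ^ b * blockDensity L A b := by
  rw [mass, sum_range_blockStart]
  exact sum_congr rfl fun b _ => sum_indicator_block hL A b

lemma mass_univ_blockStart (B : ℕ) : mass L Set.univ (blockStart L B) = 2 ^ B - 1 := by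
  have hdens (b : ℕ) : blockDensity L Set.univ b = 1 := by
    rw [blockDensity, blockCount, Set.univ_inter, Set.ncard_coe_finset, card_block,
      div_self (Nat.cast_ne_zero.2 (hL b).ne')]
  rw [mass_blockStart hL]
  norm_num [hdens, geom_sum_eq]

lemma tendsto_blockDensity_of_mem_EU {A : Set ℕ} (hA : A ∈ EU (blockWeight L)) :
    Tendsto (blockDensity L A) atTop (𝓝 0) := by
  have hstart : Tendsto (fun b => blockStart L (b + 1)) atTop atTop :=
    tendsto_atTop_mono (fun b => b.le_succ.trans (le_blockStart hL (b + 1))) tendsto_id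
  refine squeeze_zero (blockDensity_nonneg L A) (fun b => ?_)
    (by simpa using (((mem_EU_iff_tendsto_mass L).1 hA).comp hstart).const_mul 2)
  have hmass : 2 ^ b * blockDensity L A b ≤ mass L A (blockStart L (b + 1)) := by
    rw [mass_blockStart hL, sum_range_succ, le_add_iff_nonneg_left]
    exact sum_nonneg fun j _ => mul_nonneg (by positivity) (blockDensity_nonneg L A j)
  have hpos : (0 : ℝ) < 2 ^ (b + 1) - 1 := by
    have : (2 : ℝ) ≤ 2 ^ (b + 1) := by simpa using pow_le_pow_right₀ one_le_two b.succ_pos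
    linarith
  rw [mass_univ_blockStart hL, mul_div_assoc', le_div_iff₀ hpos]
  nlinarith [blockDensity_nonneg L A b, pow_succ (2 : ℝ) b]

lemma mem_EU_of_tendsto_blockDensity {A : Set ℕ} (hA : Tendsto (blockDensity L A) atTop (𝓝 0)) :
    A ∈ EU (blockWeight L) := by
  have hT := ((tendsto_sum_two_pow_mul_div_two_pow hA).comp
    ((tendsto_add_atTop_nat 1).comp (tendsto_blockOf hL))).const_mul 4
  rw [mul_zero] at hT
  refine (mem_EU_iff_tendsto_mass L).2 <| squeeze_zero'
    (Eventually.of_forall fun n => div_nonneg (mass_nonneg L A n) (mass_nonneg L _ n)) ?_ hT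
  filter_upwards [eventually_ge_atTop (blockStart L 1)] with n hn
  set b := blockOf L n
  have hb : 1 ≤ b := by
    by_contra! h
    exact ((blockOf_lt_iff hL).1 h).not_ge hn
  set T := ∑ j ∈ range (b + 1), 2 ^ j * blockDensity L A j
  have hT0 : 0 ≤ T := sum_nonneg fun j _ => mul_nonneg (by positivity) (blockDensity_nonneg L A j)
  have hnum : mass L A n ≤ T :=
    (mass_mono L A (lt_blockStart_blockOf_succ hL n).le).trans_eq (mass_blockStart hL A _)
  have hden : 2 ^ (b + 1) / 4 ≤ mass L Set.univ n := by
    have : (2 : ℝ) ≤ 2 ^ b := by simpa using pow_le_pow_right₀ one_le_two hb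
    calc (2 : ℝ) ^ (b + 1) / 4 ≤ 2 ^ b - 1 := by rw [pow_succ]; linarith
      _ = mass L Set.univ (blockStart L b) := (mass_univ_blockStart hL b).symm
      _ ≤ mass L Set.univ n := mass_mono L _ (blockStart_blockOf_le L n)
  calc mass L A n / mass L Set.univ n ≤ T / (2 ^ (b + 1) / 4) :=
        div_le_div₀ hT0 hnum (by positivity) hden
    _ = 4 * (T / 2 ^ (b + 1)) := by ring

theorem mem_EU_blockWeight_iff {A : Set ℕ} :
    A ∈ EU (blockWeight L) ↔ Tendsto (blockDensity L A) atTop (𝓝 0) :=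
  ⟨tendsto_blockDensity_of_mem_EU hL, mem_EU_of_tendsto_blockDensity hL⟩

lemma notMem_EU_blockWeight {A : Set ℕ} {ε : ℝ} {c : ℕ → ℕ} (hc : Tendsto c atTop atTop)
    (hε : 0 < ε) (h : ∀ i, ε ≤ blockDensity L A (c i)) : A ∉ EU (blockWeight L) := by
  rw [mem_EU_blockWeight_iff hL]
  intro hA
  obtain ⟨i, hi⟩ := ((hA.comp hc).eventually (gt_mem_nhds hε)).exists
  exact (h i).not_gt hi

end Blocks

theorem euCond_blockWeight {L : ℕ → ℕ} (hL : ∀ b, 2 ^ b ≤ L b) : EUcond (blockWeight L) := by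
  have hL₀ (b : ℕ) : 0 < L b := (Nat.two_pow_pos b).trans_le (hL b)
  have htop : Tendsto (mass L Set.univ) atTop atTop := by
    refine tendsto_atTop_atTop_of_monotone (mass_mono L _) fun r => ⟨blockStart L ⌈r⌉₊, ?_⟩
    rw [mass_univ_blockStart hL₀]
    have : ((⌈r⌉₊ + 1 : ℕ) : ℝ) ≤ 2 ^ ⌈r⌉₊ := by exact_mod_cast Nat.lt_two_pow_self
    push_cast at this
    linarith [Nat.le_ceil r]
  simp only [EUcond, ← mass_univ]
  refine ⟨blockWeight_nonneg L, htop, ?_⟩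
  have hle (n : ℕ) : blockWeight L n ≤ 1 := by
    rw [blockWeight, div_le_one (by exact_mod_cast hL₀ _)]
    exact_mod_cast hL _
  refine squeeze_zero' (Eventually.of_forall fun n => div_nonneg (blockWeight_nonneg L n)
    (mass_nonneg L _ _)) ?_ (tendsto_inv_atTop_zero.comp (htop.comp (tendsto_add_atTop_nat 1)))
  filter_upwards [(htop.comp (tendsto_add_atTop_nat 1)).eventually_gt_atTop 0] with n hn
  rw [Function.comp_apply, ← one_div]
  exact div_le_div_of_nonneg_right (hle n) hn.le

section Construction

def spacing (k : ℕ) : ℕ := 4 * k + 4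

def levelStart : ℕ → ℕ
  | 0 => 0
  | k + 1 => levelStart k + spacing k * 2 ^ k + spacing k

open Classical in
noncomputable def code (x : Set ℕ) (k : ℕ) : ℕ := ∑ i ∈ range k with i ∈ x, 2 ^ i

noncomputable def levelExp (x : Set ℕ) (k : ℕ) : ℕ := levelStart k + spacing k * code x k

noncomputable def blockExp (x : Set ℕ) (b : ℕ) : ℕ :=
  levelExp x ((b + 1) / 2) + if b % 2 = 1 then (b + 1) / 2 else 0

noncomputable def blockLen (x : Set ℕ) (b : ℕ) : ℕ := 2 ^ blockExp x b

lemma code_lt (x : Set ℕ) (k : ℕ) : code x k < 2 ^ k := by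
  classical
  exact Nat.geomSum_lt le_rfl fun i hi => by simpa using (mem_filter.1 hi).1

lemma exists_code_ne {x y : Set ℕ} (hxy : x ≠ y) : ∃ k₀, ∀ k, k₀ ≤ k → code x k ≠ code y k := by
  classical
  obtain ⟨n, hn⟩ : ∃ n, ¬(n ∈ x ↔ n ∈ y) := by
    by_contra! h
    exact hxy (Set.ext h)
  refine ⟨n + 1, fun k hk heq => hn ?_⟩
  have := congrArg (n ∈ ·) (Finset.geomSum_injective le_rfl heq)
  simpa [show n < k by omega] using this

lemma levelStart_gap {l l' : ℕ} (h : l < l') :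
    levelStart l + spacing l * 2 ^ l + 2 * l' + 1 ≤ levelStart l' := by
  induction l' with
  | zero => omega
  | succ l' ih =>
    simp only [levelStart, spacing] at ih ⊢
    rcases Nat.lt_succ_iff_lt_or_eq.1 h with h | rfl
    · have := ih h; omega
    · omega

lemma levelExp_add_spacing_le (x : Set ℕ) (k : ℕ) :
    levelExp x k + spacing k ≤ levelStart k + spacing k * 2 ^ k := by
  have := Nat.mul_le_mul_left (spacing k) (code_lt x k)
  rw [Nat.mul_succ] at this
  unfold levelExp
  omega

lemma levelExp_add_spacing_le_of_code_lt {x y : Set ℕ} {k : ℕ} (h : code x k < code y k) :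
    levelExp x k + spacing k ≤ levelExp y k := by
  have := Nat.mul_le_mul_left (spacing k) h
  rw [Nat.mul_succ] at this
  unfold levelExp
  omega

lemma blockExp_add_le_of_lt (x y : Set ℕ) {b b' : ℕ} (h : (b + 1) / 2 < (b' + 1) / 2) :
    blockExp x b + 2 * ((b' + 1) / 2) + 1 ≤ blockExp y b' := by
  have := levelStart_gap h
  have := levelExp_add_spacing_le x ((b + 1) / 2)
  unfold blockExp levelExp at *
  unfold spacing at *
  split_ifs <;> omega

lemma blockExp_injective (x : Set ℕ) : Function.Injective (blockExp x) := by
  intro b b' h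
  rcases lt_trichotomy ((b + 1) / 2) ((b' + 1) / 2) with hl | hl | hl
  · have := blockExp_add_le_of_lt x x hl; omega
  · unfold blockExp at h
    rw [hl] at h
    split_ifs at h <;> omega
  · have := blockExp_add_le_of_lt x x hl; omega

lemma self_le_blockExp (x : Set ℕ) (b : ℕ) : b ≤ blockExp x b := by
  have : 2 * ((b + 1) / 2) ≤ levelStart ((b + 1) / 2) := by
    rcases Nat.eq_zero_or_pos ((b + 1) / 2) with h | h
    · omega
    · have := levelStart_gap h; omega
  unfold blockExp levelExp
  omega

lemma blockExp_separated {x y : Set ℕ} {k₀ J : ℕ} (hcode : ∀ k, k₀ ≤ k → code x k ≠ code y k)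
    (hJ : k₀ ≤ J + 1) (b : ℕ) :
    blockExp x b + 3 ≤ blockExp y (2 * J + 1) ∨ blockExp y (2 * J + 1) + b ≤ blockExp x b := by
  rcases lt_trichotomy ((b + 1) / 2) (J + 1) with hl | hl | hl
  · have := blockExp_add_le_of_lt x y (b := b) (b' := 2 * J + 1) (by omega); omega
  · have hy : blockExp y (2 * J + 1) = levelExp y (J + 1) + (J + 1) := by
      simp [blockExp, show (2 * J + 1 + 1) / 2 = J + 1 by omega]
    have hx : blockExp x b ≤ levelExp x (J + 1) + (J + 1) ∧ levelExp x (J + 1) ≤ blockExp x b := by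
      unfold blockExp; rw [hl]; split_ifs <;> omega
    have hsp : spacing (J + 1) = 4 * (J + 1) + 4 := rfl
    rcases (hcode (J + 1) hJ).lt_or_gt with hc | hc
    · have := levelExp_add_spacing_le_of_code_lt hc; omega
    · have := levelExp_add_spacing_le_of_code_lt hc; omega
  · have := blockExp_add_le_of_lt y x (b := 2 * J + 1) (b' := b) (by omega); omega

lemma blockLen_pos (x : Set ℕ) (b : ℕ) : 0 < blockLen x b := Nat.two_pow_pos _

lemma two_pow_le_blockLen (x : Set ℕ) (b : ℕ) : 2 ^ b ≤ blockLen x b :=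
  Nat.pow_le_pow_right two_pos (self_le_blockExp x b)

lemma blockLen_odd (x : Set ℕ) (k : ℕ) :
    blockLen x (2 * k + 1) = blockLen x (2 * k + 2) * 2 ^ (k + 1) := by
  simp only [blockLen, blockExp, ← pow_add, show (2 * k + 1 + 1) / 2 = k + 1 by omega,
    show (2 * k + 2 + 1) / 2 = k + 1 by omega]
  congr 1
  split_ifs <;> omega

end Construction

section NotIncInv

variable (L : ℕ → ℕ)

def oddHeads : Set ℕ :=
  {n | Odd (blockOf L n) ∧ n < blockStart L (blockOf L n) + L (blockOf L n + 1)}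

def evenBlocks : Set ℕ := {n | Even (blockOf L n) ∧ blockOf L n ≠ 0}

variable {L} (hL : ∀ b, 0 < L b)
include hL

lemma cnt_evenBlocks_le_cnt_oddHeads (hodd : ∀ b, Odd b → L (b + 1) ≤ L b) (n : ℕ) :
    cnt (evenBlocks L) n ≤ cnt (oddHeads L) n := by
  have key : ∀ m ∈ evenBlocks L, ∃ c, blockOf L m = c + 1 ∧ Odd c ∧ L c ≤ m ∧
      blockOf L (m - L c) = c ∧ m - L c < blockStart L c + L (c + 1) := by
    rintro m ⟨heven, hne⟩
    obtain ⟨c, hc⟩ : ∃ c, blockOf L m = c + 1 := Nat.exists_eq_succ_of_ne_zero hne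
    have hcodd : Odd c := Nat.not_even_iff_odd.1 (Nat.even_add_one.1 (hc ▸ heven))
    have hm := (blockOf_eq_iff hL).1 hc
    have := hodd c hcodd
    have := blockStart_succ L c
    have := blockStart_succ L (c + 1)
    exact ⟨c, hc, hcodd, by omega, (blockOf_eq_iff hL).2 (by omega), by omega⟩
  -- shift each even block left by the length of the preceding odd block, into that block's head
  refine Set.ncard_le_ncard_of_injOn (fun m => m - L (blockOf L m - 1)) ?_ ?_
    ((Set.finite_Iio n).inter_of_right _)
  · rintro m ⟨hm, hmn⟩
    obtain ⟨c, hc, hcodd, -, hblk, hlt⟩ := key m hm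
    rw [hc, Nat.add_sub_cancel]
    refine ⟨⟨?_, ?_⟩, ?_⟩
    · rwa [hblk]
    · rwa [hblk]
    · rw [Set.mem_Iio] at hmn ⊢
      omega
  · rintro m₁ ⟨hm₁, -⟩ m₂ ⟨hm₂, -⟩ h
    obtain ⟨c₁, hc₁, -, hle₁, hblk₁, -⟩ := key m₁ hm₁
    obtain ⟨c₂, hc₂, -, hle₂, hblk₂, -⟩ := key m₂ hm₂
    dsimp only at h
    rw [hc₁, hc₂, Nat.add_sub_cancel, Nat.add_sub_cancel] at h
    have : c₁ = c₂ := by rw [← hblk₁, ← hblk₂, h]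
    subst this
    omega

lemma blockDensity_evenBlocks (k : ℕ) : blockDensity L (evenBlocks L) (2 * k + 2) = 1 := by
  have hblock : evenBlocks L ∩ ↑(block L (2 * k + 2)) = ↑(block L (2 * k + 2)) :=
    Set.inter_eq_right.2 fun n hn => by
      rw [mem_coe, mem_block_iff hL] at hn
      exact ⟨hn ▸ ⟨k + 1, by ring⟩, by omega⟩
  rw [blockDensity, blockCount, hblock, Set.ncard_coe_finset, card_block,
    div_self (Nat.cast_ne_zero.2 (hL _).ne')]

lemma blockCount_oddHeads_le (b : ℕ) : blockCount L (oddHeads L) b ≤ L (b + 1) := by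
  refine (Set.ncard_le_ncard (t := Set.Ico (blockStart L b) (blockStart L b + L (b + 1)))
    ?_ (Set.finite_Ico _ _)).trans_eq (by simp)
  rintro n ⟨⟨-, hn⟩, hb⟩
  have hb' := (mem_block_iff hL).1 hb
  rw [mem_coe, block, mem_Ico] at hb
  exact ⟨hb.1, hb' ▸ hn⟩

lemma blockCount_oddHeads_of_even {b : ℕ} (hb : Even b) : blockCount L (oddHeads L) b = 0 := by
  rw [blockCount, Set.ncard_eq_zero]
  refine Set.eq_empty_of_forall_notMem fun n ⟨⟨hodd, _⟩, hn⟩ => ?_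
  rw [mem_coe, mem_block_iff hL] at hn
  exact Nat.not_odd_iff_even.2 (hn ▸ hb) hodd

end NotIncInv

lemma blockDensity_oddHeads_le (x : Set ℕ) (b : ℕ) :
    blockDensity (blockLen x) (oddHeads (blockLen x)) b ≤ (1 / 2) ^ (b / 2) := by
  have hL := blockLen_pos x
  rcases Nat.even_or_odd b with hb | ⟨k, rfl⟩
  · rw [blockDensity, blockCount_oddHeads_of_even hL hb]
    simp
  have hcount : (blockCount (blockLen x) (oddHeads (blockLen x)) (2 * k + 1) : ℝ) ≤
      blockLen x (2 * k + 2) := by exact_mod_cast blockCount_oddHeads_le hL _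
  have hpos : (0 : ℝ) < blockLen x (2 * k + 2) := by exact_mod_cast hL _
  rw [blockDensity, div_le_iff₀ (Nat.cast_pos.2 (hL _)), blockLen_odd,
    show (2 * k + 1) / 2 = k by omega]
  push_cast
  calc _ ≤ (blockLen x (2 * k + 2) : ℝ) := hcount
    _ ≤ (1 / 2) ^ k * (blockLen x (2 * k + 2) * 2 ^ (k + 1)) := by
      rw [one_div, inv_pow, pow_succ]
      field_simp
      nlinarith

theorem not_incInv (x : Set ℕ) : ¬ IncInv (EU (blockWeight (blockLen x))) := by
  have hL := blockLen_pos x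
  have hodd (b : ℕ) (hb : Odd b) : blockLen x (b + 1) ≤ blockLen x b := by
    obtain ⟨k, rfl⟩ := hb
    rw [blockLen_odd]
    exact Nat.le_mul_of_pos_right _ (Nat.two_pow_pos _)
  have hheads : oddHeads (blockLen x) ∈ EU (blockWeight (blockLen x)) := by
    rw [mem_EU_blockWeight_iff hL]
    exact squeeze_zero (blockDensity_nonneg _ _) (blockDensity_oddHeads_le x)
      ((tendsto_pow_atTop_nhds_zero_of_lt_one (by norm_num) (by norm_num)).comp
        (Nat.tendsto_div_const_atTop two_ne_zero))
  intro h
  exact notMem_EU_blockWeight hL (c := fun k => 2 * k + 2) (tendsto_atTop_mono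
    (fun k => (by omega : k ≤ 2 * k + 2)) tendsto_id) one_pos (fun k => (blockDensity_evenBlocks hL k).ge)
    (h _ hheads _ (cnt_evenBlocks_le_cnt_oddHeads hL hodd))

section Antichain

lemma exists_seq_separated_fibres (β : ℕ → ℕ) (P : ℕ → Finset ℕ → Prop)
    (h : ∀ N J₀, ∃ J, J₀ ≤ J ∧ ∃ S : Finset ℕ, (∀ n ∈ S, N ≤ β n) ∧ P J S) :
    ∃ (J : ℕ → ℕ) (S : ℕ → Finset ℕ), StrictMono J ∧ (∀ i, P (J i) (S i)) ∧
      ∀ b, ∃ i, ∀ j, ∀ n ∈ S j, β n = b → n ∈ S i := by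
  choose J hJ S hS hP using h
  let next : ℕ × ℕ → ℕ × ℕ := fun p => (max p.1 ((S p.1 p.2).sup β) + 1, J p.1 p.2 + 1)
  let seq : ℕ → ℕ × ℕ := fun i => next^[i] (0, 0)
  have hseq (i : ℕ) : seq (i + 1) = next (seq i) := Function.iterate_succ_apply' _ _ _
  have hN : StrictMono fun i => (seq i).1 := strictMono_nat_of_lt_succ fun i => by
    rw [hseq]; exact Nat.lt_succ_of_le (le_max_left _ _)
  have hrange (i : ℕ) : ∀ n ∈ S (seq i).1 (seq i).2, (seq i).1 ≤ β n ∧ β n < (seq (i + 1)).1 :=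
    fun n hn => ⟨hS _ _ n hn, by
      rw [hseq]; exact Nat.lt_succ_of_le ((le_sup (f := β) hn).trans (le_max_right _ _))⟩
  have hdisj (i j : ℕ) (hij : i < j) : ∀ n ∈ S (seq i).1 (seq i).2, ∀ m ∈ S (seq j).1 (seq j).2,
      β n < β m := fun n hn m hm =>
    (hrange i n hn).2.trans_le ((hN.monotone hij).trans (hrange j m hm).1)
  refine ⟨fun i => J (seq i).1 (seq i).2, fun i => S (seq i).1 (seq i).2,
    strictMono_nat_of_lt_succ fun i => ?_, fun i => hP _ _, fun b => ?_⟩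
  · rw [hseq]; exact Nat.lt_of_succ_le (hJ _ _)
  by_cases hb : ∃ i, ∃ n ∈ S (seq i).1 (seq i).2, β n = b
  · obtain ⟨i, n, hn, rfl⟩ := hb
    refine ⟨i, fun j m hm hmn => ?_⟩
    rcases lt_trichotomy i j with hij | rfl | hij
    · exact absurd hmn (hdisj i j hij n hn m hm).ne'
    · exact hm
    · exact absurd hmn (hdisj j i hij m hm n hn).ne
  · push Not at hb
    exact ⟨0, fun j n hn hnb => absurd hnb (hb j n hn)⟩

def lightPart (L : ℕ → ℕ) (N : ℕ) (Y : Finset ℕ) : Finset ℕ :=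
  {n ∈ Y | N ≤ blockOf L n ∧
    #{m ∈ Y | blockOf L m = blockOf L n} * (blockOf L n + 1) ≤ L (blockOf L n)}

lemma blockCount_lightPart_mul_le {L : ℕ → ℕ} (hL : ∀ b, 0 < L b) (N : ℕ) (Y : Finset ℕ)
    (b : ℕ) : blockCount L ↑(lightPart L N Y) b * (b + 1) ≤ L b := by
  rw [blockCount_coe]
  rcases (lightPart L N Y ∩ block L b).eq_empty_or_nonempty with h | ⟨n, hn⟩
  · simp [h]
  rw [mem_inter, mem_block_iff hL] at hn
  obtain ⟨-, -, hlight⟩ := mem_filter.1 hn.1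
  rw [hn.2] at hlight
  refine le_trans (Nat.mul_le_mul_right _ (card_le_card fun m hm => ?_)) hlight
  rw [mem_inter, mem_block_iff hL] at hm
  exact mem_filter.2 ⟨(mem_filter.1 hm.1).1, hm.2⟩

lemma card_le_blockCount_preimage (L : ℕ → ℕ) (φ : ℕ → ℕ) {S : Finset ℕ} {b : ℕ}
    (hS : S ⊆ (block L b).image φ) : #S ≤ blockCount L (φ ⁻¹' ↑S) b := by
  classical
  rw [blockCount_eq_card_filter]
  refine (card_le_card fun s hs => ?_).trans (card_image_le (f := φ))
  obtain ⟨n, hn, rfl⟩ := mem_image.1 (hS hs)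
  exact mem_image_of_mem φ (mem_filter.2 ⟨hn, hs⟩)

lemma four_mul_sum_blockLen_lt (x : Set ℕ) {H : Finset ℕ} {g : ℕ}
    (hH : ∀ b ∈ H, blockExp x b + 3 ≤ g) : 4 * ∑ b ∈ H, blockLen x b < 2 ^ g := by
  have hinj : Set.InjOn (fun b => blockExp x b + 2) ↑H := fun b _ b' _ h =>
    blockExp_injective x (by simpa using h)
  calc 4 * ∑ b ∈ H, blockLen x b = ∑ e ∈ H.image (fun b => blockExp x b + 2), 2 ^ e := by
        rw [sum_image hinj, mul_sum]
        exact sum_congr rfl fun b _ => by rw [blockLen, pow_add]; ring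
    _ < 2 ^ g := Nat.geomSum_lt le_rfl fun e he => by
        obtain ⟨b, hb, rfl⟩ := mem_image.1 he
        have := hH b hb
        omega

lemma two_pow_le_two_mul_card_lightPart (x : Set ℕ) {Y : Finset ℕ} {g N : ℕ} (hY : #Y = 2 ^ g)
    (hN : 4 * blockStart (blockLen x) N ≤ 2 ^ g)
    (hsep : ∀ b, blockExp x b + 3 ≤ g ∨ g + b ≤ blockExp x b) :
    2 ^ g ≤ 2 * #(lightPart (blockLen x) N Y) := by
  have hL := blockLen_pos x
  set β := blockOf (blockLen x)
  set low := {n ∈ Y | β n < N}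
  set heavy := {n ∈ Y | N ≤ β n ∧ blockLen x (β n) < #{m ∈ Y | β m = β n} * (β n + 1)}
  have hcover : Y ⊆ lightPart (blockLen x) N Y ∪ low ∪ heavy := fun n hn => by
    simp only [lightPart, low, heavy, mem_union, mem_filter, hn, true_and, β]
    omega
  have hlow : #low ≤ blockStart (blockLen x) N := by
    refine (card_le_card fun n hn => ?_).trans_eq (card_range _)
    exact mem_range.2 ((blockOf_lt_iff hL).1 (mem_filter.1 hn).2)
  have hheavy : 4 * #heavy < 2 ^ g := by
    refine lt_of_le_of_lt (Nat.mul_le_mul_left 4 ?_) (four_mul_sum_blockLen_lt x (H := heavy.image β)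
      fun b hb => ?_)
    · refine (card_le_card fun n hn => mem_biUnion.2 ⟨β n, mem_image_of_mem β hn,
        (mem_block_iff hL).2 rfl⟩).trans (card_biUnion_le.trans_eq ?_)
      exact sum_congr rfl fun b _ => card_block _ b
    obtain ⟨n, hn, rfl⟩ := mem_image.1 hb
    obtain ⟨-, -, hbig⟩ := mem_filter.1 hn
    have hfibre : #{m ∈ Y | β m = β n} ≤ 2 ^ g := hY ▸ card_filter_le _ _
    have : blockLen x (β n) < 2 ^ (g + β n) := by
      rw [pow_add]
      exact hbig.trans_le (Nat.mul_le_mul hfibre Nat.lt_two_pow_self)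
    have := (Nat.pow_lt_pow_iff_right (by norm_num)).1 this
    have := hsep (β n)
    omega
  have := (card_le_card hcover).trans ((card_union_le _ _).trans
    (Nat.add_le_add_right (card_union_le _ _) _))
  omega

lemma exists_capture {x y : Set ℕ} {φ : ℕ → ℕ} (hφ : Function.Injective φ) {k₀ : ℕ}
    (hcode : ∀ k, k₀ ≤ k → code x k ≠ code y k) (N J₀ : ℕ) :
    ∃ J, J₀ ≤ J ∧ ∃ S : Finset ℕ, (∀ n ∈ S, N ≤ blockOf (blockLen x) n) ∧
      (∀ b, blockCount (blockLen x) ↑S b * (b + 1) ≤ blockLen x b) ∧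
      blockLen y (2 * J + 1) ≤ 2 * blockCount (blockLen y) (φ ⁻¹' ↑S) (2 * J + 1) := by
  set J := max J₀ (max k₀ (4 * blockStart (blockLen x) N))
  set Y := (block (blockLen y) (2 * J + 1)).image φ
  have hY : #Y = 2 ^ blockExp y (2 * J + 1) := by
    rw [card_image_of_injective _ hφ, card_block, blockLen]
  have hN : 4 * blockStart (blockLen x) N ≤ 2 ^ blockExp y (2 * J + 1) := by
    have := self_le_blockExp y (2 * J + 1)
    have : blockExp y (2 * J + 1) < 2 ^ blockExp y (2 * J + 1) := Nat.lt_two_pow_self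
    omega
  refine ⟨J, le_max_left _ _, lightPart (blockLen x) N Y, fun n hn => (mem_filter.1 hn).2.1,
    blockCount_lightPart_mul_le (blockLen_pos x) N Y, ?_⟩
  have := two_pow_le_two_mul_card_lightPart x hY hN (blockExp_separated hcode (by omega))
  have := card_le_blockCount_preimage (blockLen y) φ (S := lightPart (blockLen x) N Y)
    (filter_subset _ _)
  rw [blockLen]
  omega

theorem exists_mem_EU_preimage_notMem {x y : Set ℕ} (hxy : x ≠ y) {φ : ℕ → ℕ}
    (hφ : Function.Injective φ) :
    ∃ A ∈ EU (blockWeight (blockLen x)), φ ⁻¹' A ∉ EU (blockWeight (blockLen y)) := by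
  obtain ⟨k₀, hcode⟩ := exists_code_ne hxy
  obtain ⟨J, S, hJ, hS, hfibre⟩ :=
    exists_seq_separated_fibres (blockOf (blockLen x)) _ (exists_capture hφ hcode)
  refine ⟨⋃ i, ↑(S i), ?_, ?_⟩
  · rw [mem_EU_blockWeight_iff (blockLen_pos x)]
    refine squeeze_zero (blockDensity_nonneg _ _) (fun b => ?_)
      tendsto_one_div_add_atTop_nhds_zero_nat
    obtain ⟨i, hi⟩ := hfibre b
    have hsub : (⋃ i, (S i : Set ℕ)) ∩ ↑(block (blockLen x) b) ⊆ ↑(S i) ∩ ↑(block (blockLen x) b) :=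
      fun n ⟨hn, hnb⟩ => by
        obtain ⟨j, hj⟩ := Set.mem_iUnion.1 hn
        exact ⟨hi j n hj ((mem_block_iff (blockLen_pos x)).1 hnb), hnb⟩
    have hcount : blockCount (blockLen x) (⋃ i, ↑(S i)) b * (b + 1) ≤ blockLen x b :=
      (Nat.mul_le_mul_right _ (Set.ncard_le_ncard hsub
        ((block _ b).finite_toSet.inter_of_right _))).trans ((hS i).1 b)
    rw [blockDensity, div_le_div_iff₀ (Nat.cast_pos.2 (blockLen_pos x b)) (by positivity), one_mul]
    exact_mod_cast hcount
  · refine notMem_EU_blockWeight (blockLen_pos y) (c := fun i => 2 * J i + 1)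
      (tendsto_atTop_mono (fun i => by omega) hJ.tendsto_atTop) (by norm_num : (0 : ℝ) < 1 / 2)
      fun i => ?_
    have hle := (hS i).2.trans (Nat.mul_le_mul_left 2 (blockCount_mono _
      (Set.preimage_mono (Set.subset_iUnion (fun i => (S i : Set ℕ)) i)) _))
    rw [blockDensity, le_div_iff₀ (Nat.cast_pos.2 (blockLen_pos y _))]
    have : (blockLen y (2 * J i + 1) : ℝ) ≤ 2 * blockCount (blockLen y) (φ ⁻¹' ⋃ i, ↑(S i)) (2 * J i + 1) := by
      exact_mod_cast hle
    linarith

lemma injective_EU_blockWeight_blockLen :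
    Function.Injective fun x : Set ℕ => EU (blockWeight (blockLen x)) := by
  intro x y h
  by_contra hxy
  obtain ⟨A, hA, hA'⟩ := exists_mem_EU_preimage_notMem hxy Function.injective_id
  exact hA' (by simpa [← h] using hA)

end Antichain

end ErdosUlam

open ErdosUlam

/-- a `⊑`-antichain of size continuum of Erdős–Ulam ideals which
are not increasing-invariant (hence not simple density ideals). -/
theorem stmt_16 :
    ∃ F : Set (Set (Set ℕ)), Cardinal.mk F = Cardinal.continuum ∧
      (∀ I ∈ F, IsEUIdeal I ∧ ¬ IncInv I) ∧
      (∀ I ∈ F, ∀ J ∈ F, I ≠ J → ¬ SqLe I J) := by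
  refine ⟨Set.range fun x : Set ℕ => EU (blockWeight (blockLen x)), ?_, ?_, ?_⟩
  · rw [Cardinal.mk_range_eq _ injective_EU_blockWeight_blockLen, Cardinal.mk_set,
      Cardinal.mk_nat, Cardinal.two_power_aleph0]
  · rintro _ ⟨x, rfl⟩
    exact ⟨⟨_, euCond_blockWeight (two_pow_le_blockLen x), rfl⟩, not_incInv x⟩
  · rintro _ ⟨x, rfl⟩ _ ⟨y, rfl⟩ hne ⟨φ, hφ, hmap⟩
    have hxy : x ≠ y := fun h => hne (by rw [h])
    obtain ⟨A, hA, hA'⟩ := exists_mem_EU_preimage_notMem hxy hφ.injective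
    exact hA' (hmap A hA)
end

section
/- There is a family of size continuum of functions in H, each g in the family having (n/g(n)) bounded (so each Z_g is an Erdős–Ulam ideal), such that the corresponding simple density ideals Z_g form a ⊑-antichain: for any two distinct members Z_f, Z_g there is no bijection φ: ℕ → ℕ with A ∈ Z_f ⟹ φ^{-1}[A] ∈ Z_g. -/
open Filter Finset Topology

/-!
Cut `ℕ` into blocks `[N k, N (k + 1))` with `N (k + 1) = 4 (k + 1) N k`. For `X ⊆ ℕ` the weight
`g_X` is the identity on the blocks indexed by `X` and is constant `N (k + 1)` on a block `k ∉ X`;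
thus `n ≤ g_X n`, with equality on the blocks of `X`.

If `Y \ X` is infinite, no injection `φ` witnesses `Z_{g_X} ⊑ Z_{g_Y}`. For `k ∈ Y \ X`, at least
`N k` of the points `m < 2 N k` have `φ m ≥ N k`; let `U` be the union of these sets. At
`n = 2 N k` the set `U` has at least `N k = g_Y n / 2` points below `n`, so `U ∉ Z_{g_Y}`. On the
other hand, if `k` is the last block of `Y \ X` starting below `n`, then `φ[U]` has at most
`4 N k` points below `n` while `g_X n ≥ N (k + 1)`, so `φ[U] ∈ Z_{g_X}`.

The continuum family takes for `X` the set of codes of the finite prefixes of `x : ℕ → Bool`: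
distinct `x, y` differ on all long enough prefixes, so `Y \ X` is infinite.
-/

namespace DensityAntichain

lemma not_tendsto_zero_of_infinite {u : ℕ → ℝ} {c : ℝ} (hc : 0 < c) {s : Set ℕ}
    (hs : s.Infinite) (hu : ∀ n ∈ s, c ≤ u n) : ¬ Tendsto u atTop (𝓝 0) := fun h => by
  obtain ⟨n, hn, hlt⟩ :=
    ((Nat.frequently_atTop_iff_infinite.2 hs).and_eventually (h.eventually (gt_mem_nhds hc))).exists
  exact (hu n hn).not_gt hlt

lemma cnt_le_card {A : Set ℕ} {n : ℕ} {s : Finset ℕ} (h : A ∩ Set.Iio n ⊆ s) : cnt A n ≤ #s :=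
  (Set.ncard_le_ncard h s.finite_toSet).trans (Set.ncard_coe_finset s).le

lemma card_le_cnt {A : Set ℕ} {n : ℕ} {s : Finset ℕ} (hA : (s : Set ℕ) ⊆ A)
    (hn : ∀ m ∈ s, m < n) : #s ≤ cnt A n :=
  (Set.ncard_coe_finset s).symm.le.trans <|
    Set.ncard_le_ncard (fun m hm => ⟨hA hm, hn m hm⟩) ((Set.finite_Iio n).inter_of_right A)

/-- An injection sends at most `a` points below `a`. -/
lemma le_card_filter_le_apply {φ : ℕ → ℕ} (hφ : φ.Injective) (a b : ℕ) :
    b ≤ #{m ∈ range (a + b) | a ≤ φ m} := by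
  have hlow : #{m ∈ range (a + b) | ¬ a ≤ φ m} ≤ #(range a) := by
    refine card_le_card_of_injOn φ (fun m hm => ?_) hφ.injOn
    simp only [coe_filter, mem_range, not_le, Set.mem_ofPred_eq] at hm
    simpa using hm.2
  have := card_filter_add_card_filter_not (s := range (a + b)) (fun m => a ≤ φ m)
  simp only [card_range] at this hlow
  omega

def blockStart : ℕ → ℕ
  | 0 => 1
  | k + 1 => 4 * (k + 1) * blockStart k

lemma blockStart_succ (k : ℕ) : blockStart (k + 1) = 4 * (k + 1) * blockStart k := rfl

lemma blockStart_pos : ∀ k, 0 < blockStart k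
  | 0 => Nat.one_pos
  | k + 1 => by rw [blockStart_succ]; have := blockStart_pos k; positivity

lemma two_mul_blockStart_lt_succ (k : ℕ) : 2 * blockStart k < blockStart (k + 1) := by
  have := blockStart_pos k
  rw [blockStart_succ]
  nlinarith

lemma blockStart_strictMono : StrictMono blockStart :=
  strictMono_nat_of_lt_succ fun k => by have := two_mul_blockStart_lt_succ k; omega

lemma sum_range_succ_blockStart_le : ∀ k, ∑ j ∈ range (k + 1), blockStart j ≤ 2 * blockStart k
  | 0 => by simp [blockStart]
  | k + 1 => by
    rw [sum_range_succ]
    have := sum_range_succ_blockStart_le k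
    have := two_mul_blockStart_lt_succ k
    omega

lemma exists_lt_blockStart_succ (n : ℕ) : ∃ k, n < blockStart (k + 1) :=
  ⟨n, (blockStart_strictMono.id_le n).trans_lt (blockStart_strictMono (Nat.lt_add_one n))⟩

/-- The index of the block `[blockStart k, blockStart (k + 1))` containing `n`
(with `0` in block `0`). -/
def blockIdx (n : ℕ) : ℕ := Nat.find (exists_lt_blockStart_succ n)

lemma lt_blockStart_blockIdx_succ (n : ℕ) : n < blockStart (blockIdx n + 1) :=
  Nat.find_spec (exists_lt_blockStart_succ n)

lemma blockStart_succ_le_of_lt_blockIdx {j n : ℕ} (h : j < blockIdx n) :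
    blockStart (j + 1) ≤ n :=
  not_lt.1 (Nat.find_min (exists_lt_blockStart_succ n) h)

lemma blockIdx_eq {k n : ℕ} (h₁ : blockStart k ≤ n) (h₂ : n < blockStart (k + 1)) :
    blockIdx n = k :=
  (Nat.find_eq_iff _).2 ⟨h₂, fun _ hj => not_lt.2 ((blockStart_strictMono.monotone hj).trans h₁)⟩

lemma le_blockIdx {k n : ℕ} (h : blockStart k ≤ n) : k ≤ blockIdx n := by
  by_contra! hlt
  have := lt_blockStart_blockIdx_succ n
  have : blockStart (blockIdx n + 1) ≤ blockStart k := blockStart_strictMono.monotone hlt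
  omega

lemma blockIdx_mono : Monotone blockIdx := fun _ _ hmn =>
  Nat.find_mono fun _ hk => hmn.trans_lt hk

open scoped Classical in
noncomputable def weight (X : Set ℕ) (n : ℕ) : ℕ :=
  if blockIdx n ∈ X then n else blockStart (blockIdx n + 1)

section weight

variable {X : Set ℕ}

lemma le_weight (X : Set ℕ) (n : ℕ) : n ≤ weight X n := by
  unfold weight
  split_ifs
  exacts [le_rfl, (lt_blockStart_blockIdx_succ n).le]

lemma weight_le (X : Set ℕ) (n : ℕ) : weight X n ≤ blockStart (blockIdx n + 1) := by
  unfold weight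
  split_ifs
  exacts [(lt_blockStart_blockIdx_succ n).le, le_rfl]

lemma weight_of_mem {k n : ℕ} (hk : k ∈ X) (h₁ : blockStart k ≤ n)
    (h₂ : n < blockStart (k + 1)) : weight X n = n := by
  rw [weight, blockIdx_eq h₁ h₂, if_pos hk]

lemma blockStart_succ_le_weight {k n : ℕ} (hk : k ∉ X) (h : blockStart k ≤ n) :
    blockStart (k + 1) ≤ weight X n := by
  rcases (le_blockIdx h).lt_or_eq with hlt | rfl
  · exact (blockStart_succ_le_of_lt_blockIdx hlt).trans (le_weight X n)
  · rw [weight, if_neg hk]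

lemma weight_mono (X : Set ℕ) : Monotone (weight X) := by
  intro m n hmn
  rcases (blockIdx_mono hmn).lt_or_eq with hlt | heq
  · calc weight X m ≤ blockStart (blockIdx m + 1) := weight_le X m
      _ ≤ n := blockStart_succ_le_of_lt_blockIdx hlt
      _ ≤ weight X n := le_weight X n
  · unfold weight
    rw [heq]
    split_ifs
    exacts [hmn, le_rfl]

lemma weight_ne_weight {Y : Set ℕ} {k : ℕ} (hkY : k ∈ Y) (hkX : k ∉ X) :
    weight X ≠ weight Y := by
  intro h
  have hY := weight_of_mem hkY le_rfl (blockStart_strictMono (Nat.lt_add_one k))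
  have hX := blockStart_succ_le_weight hkX le_rfl
  have := blockStart_strictMono (Nat.lt_add_one k)
  rw [h, hY] at hX
  omega

lemma tendsto_weight (X : Set ℕ) : Tendsto (weight X) atTop atTop :=
  tendsto_atTop_mono (le_weight X) tendsto_id

lemma div_weight_le_one (X : Set ℕ) (n : ℕ) : (n : ℝ) / weight X n ≤ 1 :=
  div_le_one_of_le₀ (by exact_mod_cast le_weight X n) (Nat.cast_nonneg _)

lemma not_tendsto_div_weight (hX : X.Infinite) :
    ¬ Tendsto (fun n : ℕ => (n : ℝ) / weight X n) atTop (𝓝 0) := by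
  refine not_tendsto_zero_of_infinite one_pos
    (hX.image blockStart_strictMono.injective.injOn) ?_
  rintro _ ⟨k, hk, rfl⟩
  rw [weight_of_mem hk le_rfl (blockStart_strictMono (Nat.lt_add_one k)),
    div_self (by exact_mod_cast (blockStart_pos k).ne')]

end weight

section density

variable {X K : Set ℕ} {B : ℕ → Finset ℕ}

/-- The pieces `B j` with `j ≤ k` have total size at most `4 * blockStart k`, while `k ∉ X` forces
`weight X n ≥ blockStart (k + 1) = 4 (k + 1) blockStart k`. -/
lemma mul_cnt_iUnion_le_weight (hKX : Disjoint K X) (hB_ge : ∀ k, ∀ m ∈ B k, blockStart k ≤ m)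
    (hB_card : ∀ k, #(B k) ≤ 2 * blockStart k) {k n : ℕ} (hk : k ∈ K) (hkn : blockStart k ≤ n)
    (hmax : ∀ j ∈ K, blockStart j < n → j ≤ k) :
    (k + 1) * cnt (⋃ j ∈ K, (B j : Set ℕ)) n ≤ weight X n := by
  classical
  set F := {j ∈ range (k + 1) | j ∈ K}
  have hsub : (⋃ j ∈ K, (B j : Set ℕ)) ∩ Set.Iio n ⊆ ↑(F.biUnion B) := by
    rintro m ⟨hm, hmn⟩
    obtain ⟨j, hj, hmj⟩ := Set.mem_iUnion₂.1 hm
    have hjk : j ≤ k := hmax j hj ((hB_ge j m hmj).trans_lt hmn)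
    simp only [F, coe_biUnion, coe_filter, mem_range, Set.mem_ofPred_eq, Set.mem_iUnion,
      mem_coe, exists_prop]
    exact ⟨j, ⟨Nat.lt_succ_of_le hjk, hj⟩, hmj⟩
  have hcnt : cnt (⋃ j ∈ K, (B j : Set ℕ)) n ≤ 2 * ∑ j ∈ range (k + 1), blockStart j :=
    calc cnt (⋃ j ∈ K, (B j : Set ℕ)) n ≤ #(F.biUnion B) := cnt_le_card hsub
      _ ≤ ∑ j ∈ F, #(B j) := card_biUnion_le
      _ ≤ ∑ j ∈ F, 2 * blockStart j := sum_le_sum fun j _ => hB_card j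
      _ ≤ ∑ j ∈ range (k + 1), 2 * blockStart j := sum_le_sum_of_subset (filter_subset _ _)
      _ = 2 * ∑ j ∈ range (k + 1), blockStart j := (mul_sum _ _ _).symm
  calc (k + 1) * cnt (⋃ j ∈ K, (B j : Set ℕ)) n
      ≤ (k + 1) * (2 * (2 * blockStart k)) := by
        gcongr
        exact hcnt.trans (Nat.mul_le_mul_left 2 (sum_range_succ_blockStart_le k))
    _ = blockStart (k + 1) := by rw [blockStart_succ]; ring
    _ ≤ weight X n := blockStart_succ_le_weight (hKX.notMem_of_mem_left hk) hkn

lemma iUnion_mem_Zg_weight (hKX : Disjoint K X) (hK : K.Infinite)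
    (hB_ge : ∀ k, ∀ m ∈ B k, blockStart k ≤ m) (hB_card : ∀ k, #(B k) ≤ 2 * blockStart k) :
    (⋃ j ∈ K, (B j : Set ℕ)) ∈ Zg (fun n => (weight X n : ℝ)) := by
  classical
  rw [Zg, Set.mem_ofPred_eq, Metric.tendsto_atTop]
  intro ε hε
  obtain ⟨k₀, hk₀⟩ := exists_nat_one_div_lt hε
  obtain ⟨k₁, hk₁K, hk₀₁⟩ := hK.exists_gt k₀
  refine ⟨blockStart k₁ + 1, fun n hn => ?_⟩
  set F := {j ∈ range n | j ∈ K ∧ blockStart j < n}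
  have hmemF : ∀ j ∈ K, blockStart j < n → j ∈ F := fun j hj hjn =>
    mem_filter.2 ⟨mem_range.2 ((blockStart_strictMono.id_le j).trans_lt hjn), hj, hjn⟩
  have hk₁F := hmemF k₁ hk₁K (by omega)
  set k := F.max' ⟨k₁, hk₁F⟩
  obtain ⟨-, hkK, hkn⟩ := mem_filter.1 (F.max'_mem ⟨k₁, hk₁F⟩)
  have hbound := mul_cnt_iUnion_le_weight hKX hB_ge hB_card hkK hkn.le
    fun j hj hjn => F.le_max' j (hmemF j hj hjn)
  have hk₁k : k₁ ≤ k := F.le_max' k₁ hk₁F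
  have hw : (0 : ℝ) < weight X n := by
    have := le_weight X n
    exact_mod_cast (show 0 < weight X n by omega)
  rw [Real.dist_0_eq_abs, abs_of_nonneg (by positivity)]
  calc (cnt (⋃ j ∈ K, (B j : Set ℕ)) n : ℝ) / weight X n ≤ 1 / ((k : ℝ) + 1) := by
        rw [div_le_div_iff₀ hw (by positivity), one_mul, mul_comm]
        exact_mod_cast hbound
    _ ≤ 1 / ((k₀ : ℝ) + 1) := by gcongr; exact_mod_cast (hk₀₁.trans_le hk₁k).le
    _ < ε := hk₀

lemma not_mem_Zg_weight {Y U : Set ℕ} (hKY : K ⊆ Y) (hK : K.Infinite)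
    (hU : ∀ k ∈ K, blockStart k ≤ cnt U (2 * blockStart k)) :
    U ∉ Zg (fun n => (weight Y n : ℝ)) := by
  have hinj : StrictMono fun k => 2 * blockStart k := fun _ _ h =>
    Nat.mul_lt_mul_of_pos_left (blockStart_strictMono h) two_pos
  refine not_tendsto_zero_of_infinite (by norm_num : (0 : ℝ) < 1 / 2)
    (hK.image hinj.injective.injOn) ?_
  rintro _ ⟨k, hk, rfl⟩
  dsimp only
  have hpos : (0 : ℝ) < blockStart k := by exact_mod_cast blockStart_pos k
  have hcnt : (blockStart k : ℝ) ≤ cnt U (2 * blockStart k) := by exact_mod_cast hU k hk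
  rw [weight_of_mem (hKY hk) (Nat.le_mul_of_pos_left _ two_pos) (two_mul_blockStart_lt_succ k)]
  push_cast
  rw [le_div_iff₀ (by positivity)]
  linarith

end density

theorem not_sqLe_Zg_weight {X Y : Set ℕ} (h : (Y \ X).Infinite) :
    ¬ SqLe (Zg fun n => (weight X n : ℝ)) (Zg fun n => (weight Y n : ℝ)) := by
  classical
  rintro ⟨φ, hφ, hmap⟩
  set T : ℕ → Finset ℕ := fun k => {m ∈ range (2 * blockStart k) | blockStart k ≤ φ m}
  have hT : ∀ k, blockStart k ≤ #(T k) := fun k => by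
    simpa only [T, two_mul] using le_card_filter_le_apply hφ.1 (blockStart k) (blockStart k)
  have himage : φ '' ⋃ k ∈ Y \ X, (T k : Set ℕ) ∈ Zg fun n => (weight X n : ℝ) := by
    rw [Set.image_iUnion₂]
    simp only [← coe_image]
    refine iUnion_mem_Zg_weight Set.disjoint_sdiff_left h (fun k m hm => ?_)
      (fun k => card_image_le.trans (card_filter_le _ _ |>.trans (card_range _).le))
    obtain ⟨m', hm', rfl⟩ := mem_image.1 hm
    exact (mem_filter.1 hm').2
  have hpre := hmap _ himage
  rw [Set.preimage_image_eq _ hφ.1] at hpre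
  refine not_mem_Zg_weight Set.sdiff_subset h (fun k hk => (hT k).trans (card_le_cnt ?_ ?_)) hpre
  · exact Set.subset_biUnion_of_mem (u := fun k => (T k : Set ℕ)) hk
  · exact fun m hm => mem_range.1 (mem_filter.1 hm).1

def prefixCode (x : ℕ → Bool) (n : ℕ) : ℕ := Encodable.encode (List.ofFn fun i : Fin n => x i)

lemma prefixCode_injective (x : ℕ → Bool) : (prefixCode x).Injective := fun m n h => by
  simpa using congrArg List.length (Encodable.encode_injective h)

lemma prefixCode_ne {x y : ℕ → Bool} {i m n : ℕ} (hi : x i ≠ y i) (hn : i < n) :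
    prefixCode x m ≠ prefixCode y n := by
  intro h
  have hl := Encodable.encode_injective h
  have hmn : m = n := by simpa using congrArg List.length hl
  subst hmn
  exact hi (by simpa [hn] using congrArg (·[i]?) hl)

lemma infinite_range_prefixCode_diff {x y : ℕ → Bool} (h : x ≠ y) :
    (Set.range (prefixCode y) \ Set.range (prefixCode x)).Infinite := by
  obtain ⟨i, hi⟩ := Function.ne_iff.1 h
  refine ((Set.Ioi_infinite i).image (prefixCode_injective y).injOn).mono ?_
  rintro _ ⟨n, hn, rfl⟩
  exact ⟨⟨n, rfl⟩, fun ⟨m, hm⟩ => prefixCode_ne hi hn hm⟩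

end DensityAntichain

open DensityAntichain in
/-- a `⊑`-antichain of size continuum of Erdős–Ulam simple
density ideals. -/
theorem stmt_17 :
    ∃ G : Set (ℕ → ℕ), Cardinal.mk G = Cardinal.continuum ∧
      (∀ g ∈ G, Monotone g ∧ Tendsto g atTop atTop ∧
        (¬ Tendsto (fun n : ℕ => (n : ℝ) / (g n : ℝ)) atTop (𝓝 0)) ∧
        (∃ C : ℝ, ∀ n : ℕ, (n : ℝ) / (g n : ℝ) ≤ C)) ∧
      (∀ f ∈ G, ∀ g ∈ G, f ≠ g →
        Zg (fun n => (f n : ℝ)) ≠ Zg (fun n => (g n : ℝ)) ∧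
        ¬ SqLe (Zg (fun n => (f n : ℝ))) (Zg (fun n => (g n : ℝ)))) := by
  set w : (ℕ → Bool) → ℕ → ℕ := fun x => weight (Set.range (prefixCode x))
  have hw : w.Injective := fun x y hxy => by
    by_contra hne
    obtain ⟨k, hkY, hkX⟩ := (infinite_range_prefixCode_diff hne).nonempty
    exact weight_ne_weight hkY hkX hxy
  refine ⟨Set.range w, by simp [Cardinal.mk_range_eq _ hw], ?_, ?_⟩
  · rintro _ ⟨x, rfl⟩
    exact ⟨weight_mono _, tendsto_weight _,
      not_tendsto_div_weight (Set.infinite_range_of_injective (prefixCode_injective x)),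
      1, div_weight_le_one _⟩
  · rintro _ ⟨x, rfl⟩ _ ⟨y, rfl⟩ hxy
    have h := not_sqLe_Zg_weight (infinite_range_prefixCode_diff fun h => hxy (congrArg w h))
    exact ⟨fun heq => h ⟨id, Function.bijective_id, fun A hA => heq ▸ hA⟩, h⟩
end

section
/- Let (D_n) be consecutive intervals with |D_n| = 2·n! and define μ_n uniform with value 1/n! on the first n! elements of D_n (zero elsewhere) and ν_n uniform with value 1/n! on the last n! elements of D_n (zero elsewhere). Then Exh(sup_n μ_n) is increasing-invariant, Exh(sup_n ν_n) is not increasing-invariant, and the two ideals are isomorphic (there is a bijection φ: ℕ → ℕ with A ∈ Exh(sup μ_n) ⟺ φ^{-1}[A] ∈ Exh(sup ν_n)). -/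
open Filter Finset Topology

/-- Left endpoints of the consecutive intervals `D_n` of length `2·n!`. -/
def s18 (n : ℕ) : ℕ := ∑ k ∈ Finset.range n, 2 * k.factorial

/-- Measure uniform with value `1/n!` on the first `n!` elements of `D_n`. -/
noncomputable def mu18 (n : ℕ) (A : Set ℕ) : ℝ :=
  ∑ i ∈ Finset.Ico (s18 n) (s18 n + n.factorial),
    Set.indicator A (fun _ => (1 : ℝ) / n.factorial) i

/-- Measure uniform with value `1/n!` on the last `n!` elements of `D_n`. -/
noncomputable def nu18 (n : ℕ) (A : Set ℕ) : ℝ :=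
  ∑ i ∈ Finset.Ico (s18 n + n.factorial) (s18 (n + 1)),
    Set.indicator A (fun _ => (1 : ℝ) / n.factorial) i

/-!
Before the block `D_n` there are only `s18 n` points, and `s18 n / n! → 0`. So if `cnt C ≤ cnt B`,
then comparing counts up to the end of the first half of `D_n` gives
`μ_n(C) ≤ μ_n(B) + s18 n / n!`, whence `Exh(sup μ_n)` is increasing-invariant. For `ν_n`, the union
of the first halves is `ν`-null while its complement has `ν_n = 1` for all `n`; yet shifting each
second half down by `n!` onto the first half injects the complement into it below every bound.
The map swapping the two halves of every block carries `ν_n` to `μ_n`, which gives the isomorphism.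
-/

/-- `Exh(sup_n μ_n)`, which is `{A | μ_n(A) → 0}` since the `μ_n` here have disjoint supports. -/
def Exh (μ : ℕ → Set ℕ → ℝ) : Set (Set ℕ) := {A | Tendsto (fun n => μ n A) atTop (𝓝 0)}

lemma Nat.count_congr_of_forall_lt {p q : ℕ → Prop} [DecidablePred p] [DecidablePred q] {n : ℕ}
    (h : ∀ k < n, p k ↔ q k) : Nat.count p n = Nat.count q n :=
  le_antisymm (Nat.count_mono_left fun k hk => (h k hk).1)
    (Nat.count_mono_left fun k hk => (h k hk).2)

section

open scoped Classical

lemma cnt_eq_count (A : Set ℕ) (n : ℕ) : cnt A n = Nat.count (· ∈ A) n := by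
  rw [cnt, Nat.count_eq_card_filter_range, ← Set.ncard_coe_finset]
  congr 1
  ext x
  simp [and_comm]

lemma sum_Ico_indicator_const {R : Type*} [NonAssocSemiring R] (A : Set ℕ) (c : R) (a l : ℕ) :
    ∑ i ∈ Ico a (a + l), A.indicator (fun _ => c) i = Nat.count (fun k => a + k ∈ A) l * c := by
  rw [sum_Ico_eq_sum_range, Nat.add_sub_cancel_left, Nat.count_eq_card_filter_range,
    natCast_card_filter, sum_mul]
  simp [Set.indicator_apply]

lemma s18_succ (n : ℕ) : s18 (n + 1) = s18 n + 2 * n.factorial := by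
  simp [s18, sum_range_succ]

lemma s18_strictMono : StrictMono s18 :=
  strictMono_nat_of_lt_succ fun n => by rw [s18_succ]; have := n.factorial_pos; omega

lemma s18_le_two_mul_factorial (n : ℕ) : s18 n ≤ 2 * n.factorial := by
  induction n with
  | zero => simp [s18]
  | succ n ih =>
    rw [s18_succ]
    rcases Nat.eq_zero_or_pos n with rfl | hn
    · simp [s18]
    · have : 2 * n.factorial ≤ (n + 1).factorial := by
        rw [Nat.factorial_succ]; exact Nat.mul_le_mul_right _ (by omega)
      omega

lemma tendsto_s18_div_factorial :
    Tendsto (fun n => (s18 n : ℝ) / n.factorial) atTop (𝓝 0) := by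
  refine squeeze_zero' (Eventually.of_forall fun n => by positivity) ?_
    (tendsto_const_div_atTop_nhds_zero_nat 4)
  filter_upwards [eventually_ge_atTop 1] with n hn
  obtain ⟨m, rfl⟩ : ∃ m, n = m + 1 := ⟨n - 1, by omega⟩
  have hs : s18 (m + 1) * (m + 1) ≤ 4 * (m + 1).factorial := by
    rw [Nat.factorial_succ, s18_succ]
    have := s18_le_two_mul_factorial m
    nlinarith
  rw [div_le_div_iff₀ (by positivity) (by positivity)]
  exact_mod_cast hs

lemma exists_lt_s18_succ (m : ℕ) : ∃ n, m < s18 (n + 1) :=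
  ⟨m, m.lt_succ_self.trans_le (s18_strictMono.id_le _)⟩

def blockIdx (m : ℕ) : ℕ := Nat.find (exists_lt_s18_succ m)

lemma lt_s18_blockIdx_succ (m : ℕ) : m < s18 (blockIdx m + 1) :=
  Nat.find_spec (exists_lt_s18_succ m)

lemma s18_blockIdx_le (m : ℕ) : s18 (blockIdx m) ≤ m := by
  cases h : blockIdx m with
  | zero => simp [s18]
  | succ k => exact not_lt.1 (Nat.find_min (exists_lt_s18_succ m) (by rw [← blockIdx, h]; omega))

lemma blockIdx_eq {m n : ℕ} (h₁ : s18 n ≤ m) (h₂ : m < s18 (n + 1)) : blockIdx m = n :=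
  le_antisymm
    (Nat.lt_succ_iff.1 (s18_strictMono.lt_iff_lt.1 ((s18_blockIdx_le m).trans_lt h₂)))
    (Nat.lt_succ_iff.1 (s18_strictMono.lt_iff_lt.1 (h₁.trans_lt (lt_s18_blockIdx_succ m))))

/-- The union of the first halves `[s18 n, s18 n + n!)` of the blocks `D_n = [s18 n, s18 (n+1))`. -/
def firstHalves : Set ℕ := {m | m < s18 (blockIdx m) + (blockIdx m).factorial}

lemma mem_firstHalves {m n : ℕ} (h₁ : s18 n ≤ m) (h₂ : m < s18 n + n.factorial) :
    m ∈ firstHalves := by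
  rwa [firstHalves, Set.mem_ofPred_eq, blockIdx_eq h₁ (by rw [s18_succ]; omega)]

lemma notMem_firstHalves {m n : ℕ} (h₁ : s18 n + n.factorial ≤ m) (h₂ : m < s18 (n + 1)) :
    m ∉ firstHalves := by
  rw [firstHalves, Set.mem_ofPred_eq, blockIdx_eq (by omega) h₂]
  omega

def halfSwap (m : ℕ) : ℕ :=
  if m < s18 (blockIdx m) + (blockIdx m).factorial then m + (blockIdx m).factorial
  else m - (blockIdx m).factorial

lemma halfSwap_of_mem {m : ℕ} (h : m ∈ firstHalves) : halfSwap m = m + (blockIdx m).factorial :=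
  if_pos h

lemma halfSwap_of_notMem {m : ℕ} (h : m ∉ firstHalves) :
    halfSwap m = m - (blockIdx m).factorial :=
  if_neg h

lemma halfSwap_involutive : Function.Involutive halfSwap := by
  intro m
  set b := blockIdx m
  have h₁ : s18 b ≤ m := s18_blockIdx_le m
  have h₂ : m < s18 b + 2 * b.factorial := s18_succ b ▸ lt_s18_blockIdx_succ m
  by_cases h : m ∈ firstHalves
  · have h' : m < s18 b + b.factorial := h
    have hm₁ : s18 b + b.factorial ≤ m + b.factorial := by omega
    have hm₂ : m + b.factorial < s18 (b + 1) := by rw [s18_succ]; omega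
    rw [halfSwap_of_mem h, halfSwap_of_notMem (notMem_firstHalves hm₁ hm₂),
      blockIdx_eq (by omega) hm₂, Nat.add_sub_cancel]
  · have h' : s18 b + b.factorial ≤ m := not_lt.1 h
    have hm₁ : s18 b ≤ m - b.factorial := by omega
    have hm₂ : m - b.factorial < s18 b + b.factorial := by omega
    rw [halfSwap_of_notMem h, halfSwap_of_mem (mem_firstHalves hm₁ hm₂),
      blockIdx_eq hm₁ (by rw [s18_succ]; omega)]
    omega

lemma mu18_eq_count (n : ℕ) (A : Set ℕ) :
    mu18 n A = Nat.count (fun k => s18 n + k ∈ A) n.factorial / n.factorial := by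
  rw [mu18, sum_Ico_indicator_const, mul_one_div]

lemma nu18_eq_count (n : ℕ) (A : Set ℕ) :
    nu18 n A = Nat.count (fun k => s18 n + n.factorial + k ∈ A) n.factorial / n.factorial := by
  rw [nu18, show s18 (n + 1) = s18 n + n.factorial + n.factorial by rw [s18_succ]; ring,
    sum_Ico_indicator_const, mul_one_div]

lemma mu18_le_add_of_cnt_le {B C : Set ℕ} (h : ∀ n, cnt C n ≤ cnt B n) (n : ℕ) :
    mu18 n C ≤ mu18 n B + s18 n / n.factorial := by
  have hcount : Nat.count (fun k => s18 n + k ∈ C) n.factorial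
      ≤ s18 n + Nat.count (fun k => s18 n + k ∈ B) n.factorial := by
    have hC := Nat.count_add (· ∈ C) (s18 n) n.factorial
    have hB := Nat.count_add (· ∈ B) (s18 n) n.factorial
    have hCB := h (s18 n + n.factorial)
    rw [cnt_eq_count, cnt_eq_count] at hCB
    have := Nat.count_le (p := (· ∈ B)) (n := s18 n)
    omega
  rw [mu18_eq_count, mu18_eq_count, ← add_div, add_comm]
  gcongr
  exact_mod_cast hcount

lemma nu18_firstHalves (n : ℕ) : nu18 n firstHalves = 0 := by
  rw [nu18_eq_count, Nat.count_of_forall_not fun k hk =>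
    notMem_firstHalves (n := n) (by omega) (by rw [s18_succ]; omega), Nat.cast_zero, zero_div]

lemma nu18_compl_firstHalves (n : ℕ) : nu18 n firstHalvesᶜ = 1 := by
  rw [nu18_eq_count, div_eq_one_iff_eq (by positivity), Nat.cast_inj]
  convert Nat.count_of_forall (p := (s18 n + n.factorial + · ∈ firstHalvesᶜ)) (n := n.factorial)
    fun k hk => notMem_firstHalves (n := n) (by omega) (by rw [s18_succ]; omega)

lemma cnt_compl_firstHalves_le (m : ℕ) : cnt firstHalvesᶜ m ≤ cnt firstHalves m := by
  refine Set.ncard_le_ncard_of_injOn halfSwap ?_ halfSwap_involutive.injective.injOn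
    ((Set.finite_Iio m).inter_of_right _)
  rintro x ⟨hx, hxm⟩
  have h₁ : s18 (blockIdx x) + (blockIdx x).factorial ≤ x := not_lt.1 hx
  have h₂ := s18_succ _ ▸ lt_s18_blockIdx_succ x
  rw [halfSwap_of_notMem hx]
  rw [Set.mem_Iio] at hxm
  exact ⟨mem_firstHalves (n := blockIdx x) (by omega) (by omega), Set.mem_Iio.2 (by omega)⟩

lemma nu18_preimage_halfSwap (n : ℕ) (A : Set ℕ) : nu18 n (halfSwap ⁻¹' A) = mu18 n A := by
  rw [nu18_eq_count, mu18_eq_count]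
  congr 2
  refine Nat.count_congr_of_forall_lt fun k hk => ?_
  have h₂ : s18 n + n.factorial + k < s18 (n + 1) := by rw [s18_succ]; omega
  rw [Set.mem_preimage, halfSwap_of_notMem (notMem_firstHalves (by omega) h₂),
    blockIdx_eq (by omega) h₂, show s18 n + n.factorial + k - n.factorial = s18 n + k by omega]

lemma incInv_exh_mu18 : IncInv (Exh mu18) := by
  intro B hB C hC
  refine squeeze_zero (fun n => ?_) (mu18_le_add_of_cnt_le hC) ?_
  · rw [mu18_eq_count]; positivity
  · simpa using hB.add tendsto_s18_div_factorial

lemma not_incInv_exh_nu18 : ¬ IncInv (Exh nu18) := by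
  intro h
  have hfirst : firstHalves ∈ Exh nu18 := by
    simp only [Exh, Set.mem_ofPred_eq, nu18_firstHalves, tendsto_const_nhds]
  have hsecond := h _ hfirst _ cnt_compl_firstHalves_le
  simp only [Exh, Set.mem_ofPred_eq, nu18_compl_firstHalves] at hsecond
  exact one_ne_zero (tendsto_nhds_unique tendsto_const_nhds hsecond)

lemma preimage_halfSwap_mem_exh_nu18 (A : Set ℕ) : halfSwap ⁻¹' A ∈ Exh nu18 ↔ A ∈ Exh mu18 := by
  simp only [Exh, Set.mem_ofPred_eq, nu18_preimage_halfSwap]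

end

/-- `Exh(sup μ_n)` is increasing-invariant, `Exh(sup ν_n)` is not,
and the two (Erdős–Ulam) ideals are isomorphic. -/
theorem stmt_18 :
    IncInv {A : Set ℕ | Tendsto (fun n => mu18 n A) atTop (𝓝 0)} ∧
    ¬ IncInv {A : Set ℕ | Tendsto (fun n => nu18 n A) atTop (𝓝 0)} ∧
    ∃ φ : ℕ → ℕ, Function.Bijective φ ∧
      ∀ A : Set ℕ, A ∈ {A : Set ℕ | Tendsto (fun n => mu18 n A) atTop (𝓝 0)} ↔
        φ ⁻¹' A ∈ {A : Set ℕ | Tendsto (fun n => nu18 n A) atTop (𝓝 0)} :=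
  ⟨incInv_exh_mu18, not_incInv_exh_nu18, halfSwap, halfSwap_involutive.bijective,
    fun A => (preimage_halfSwap_mem_exh_nu18 A).symm⟩
end
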